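/- arXiv:2202.08518 — 11 statements merged into one kernel-verified Lean document; each statement's English description precedes it below -/
import Mathlib

section
/- For all real s, t with 0 < s < 1 and 0 < t < 1, the inequality (s + t + 2st)² + (1 − s²)(1 − t²) ≥ (4/5)((s + t + 2st)/(s + t))² holds. -/
theorem st_ineq (s t : ℝ) (hs0 : 0 < s) (hs1 : s < 1) (ht0 : 0 < t) (ht1 : t < 1) :
    (s + t + 2*s*t)^2 + (1 - s^2)*(1 - t^2) ≥ (4/5) * ((s + t + 2*s*t)/(s + t))^2 := by
  have hst : 0 < s + t := by linarith
  have hp : 0 < s * t := mul_pos hs0 ht0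
  rw [div_pow, ge_iff_le, ← mul_div_assoc, div_le_iff₀ (show (0:ℝ) < (s+t)^2 by positivity)]
  rcases le_or_gt (s + t) (4/5) with h | h
  · have h16 : 0 ≤ 16 - 25*(s+t)^2 := by nlinarith
    have h1 : 0 ≤ (s+t)^2 * (16 - 25*(s+t)^2) * (s*t) * ((s-t)^2) :=
      mul_nonneg (mul_nonneg (mul_nonneg (sq_nonneg _) h16) hp.le) (sq_nonneg _)
    have h2 : 0 ≤ (s+t)^2 * (s-t)^2 := mul_nonneg (sq_nonneg _) (sq_nonneg _)
    have h3 : 0 ≤ (s*t) * ((s+t)^2 * (s+t-2/5)^2 * (s+t+2)^2) := by positivity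
    nlinarith [h1, h2, h3, sq_nonneg (s+t), mul_pos hst hst]
  · have h16 : 0 ≤ 25*(s+t)^2 - 16 := by nlinarith
    have hc : 0 ≤ 10*(s+t)^2 + 5*(s+t) - 8 := by nlinarith
    have h1 : 0 ≤ (s*t) * ((25*(s+t)^2 - 16) * (s*t) + 2*(s+t)*(10*(s+t)^2 + 5*(s+t) - 8)) := by
      apply mul_nonneg hp.le
      have hA : 0 ≤ (25*(s+t)^2 - 16) * (s*t) := mul_nonneg h16 hp.le
      have hB : 0 ≤ 2*(s+t)*(10*(s+t)^2 + 5*(s+t) - 8) :=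
        mul_nonneg (by linarith) hc
      linarith
    nlinarith [h1, sq_nonneg (s+t), mul_pos hst hst]
end

section
/- For all real x, y with −1 < x < 0 < y < 1, the inequality (−x)/(2 + x) + y/(2 − y) ≥ (2/√5) · (y − x)/√((y − x)² + 4(1 + x)(1 − y)) holds, with equality if and only if x = −1/3 and y = 1/3. -/
/-!
In the variables `s = y - x ∈ (0, 2)` and `q = (x + y)² ∈ [0, min(s², (2 - s)²)]` the left side is
`2 (4s - s² + q) / ((4 - s)² - q)` and the radicand is `s² + (2 - s)² - q`. Squaring, the inequality
becomes `gap s q ≥ 0` for a polynomial `gap`, and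
`gap s q = (s (3s - 2) (s - 4))² + q · correction s q` with `correction s q > 0` on that range.
Hence `gap` vanishes only at `q = 0`, `s = 2/3`, i.e. at `x = -1/3`, `y = 1/3`.
-/

open Real

def gap (s q : ℝ) : ℝ :=
  5 * (4 * s - s ^ 2 + q) ^ 2 * (s ^ 2 + (2 - s) ^ 2 - q) - s ^ 2 * ((4 - s) ^ 2 - q) ^ 2

def correction (s q : ℝ) : ℝ :=
  s * (160 - 248 * s + 144 * s ^ 2 - 23 * s ^ 3) + q * (20 - 60 * s + 19 * s ^ 2) - 5 * q ^ 2

lemma gap_eq_sq_add (s q : ℝ) :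
    gap s q = (s * (3 * s - 2) * (s - 4)) ^ 2 + q * correction s q := by
  unfold gap correction
  ring

section

variable {s q : ℝ} (hs0 : 0 < s) (hs2 : s < 2) (hq0 : 0 ≤ q) (hq1 : q ≤ s ^ 2)
  (hq2 : q ≤ (2 - s) ^ 2)
include hs0 hs2 hq0 hq1 hq2

lemma correction_pos : 0 < correction s q := by
  unfold correction
  rcases le_or_gt s 1 with h1 | h1
  · nlinarith [mul_nonneg hq0 (sub_nonneg.2 hq1), mul_pos hs0 hs0, sq_nonneg (s - 1),
      mul_nonneg (mul_nonneg hs0.le hs0.le) (sub_nonneg.2 h1),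
      mul_nonneg (sub_nonneg.2 hq1) (sub_nonneg.2 h1), sq_nonneg q]
  · nlinarith [mul_nonneg hq0 (sub_nonneg.2 hq2), mul_pos hs0 hs0, sq_nonneg (s - 1),
      mul_nonneg (mul_nonneg hs0.le hs0.le) (sub_nonneg.2 h1.le),
      mul_nonneg (sub_nonneg.2 hq2) (sub_nonneg.2 h1.le), sq_nonneg q,
      mul_pos (sub_pos.2 hs2) hs0]

lemma gap_nonneg : 0 ≤ gap s q := by
  rw [gap_eq_sq_add]
  have := correction_pos hs0 hs2 hq0 hq1 hq2
  positivity

lemma gap_eq_zero_iff : gap s q = 0 ↔ s = 2 / 3 ∧ q = 0 := by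
  have hc := correction_pos hs0 hs2 hq0 hq1 hq2
  rw [gap_eq_sq_add]
  constructor
  · intro h
    have hqc : q * correction s q = 0 := by nlinarith [mul_nonneg hq0 hc.le]
    have hsq : (s * (3 * s - 2) * (s - 4)) ^ 2 = 0 := by nlinarith [mul_nonneg hq0 hc.le]
    have hs : 3 * s - 2 = 0 := by
      simpa [hs0.ne', (by linarith : s - 4 ≠ 0)] using hsq
    exact ⟨by linarith, (mul_eq_zero.1 hqc).resolve_right hc.ne'⟩
  · rintro ⟨rfl, rfl⟩
    norm_num

end

lemma sq_sub_sq_two_div_sqrt_five (N B s D : ℝ) (hB : B ≠ 0) (hD : 0 < D) :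
    (2 * N / B) ^ 2 - (2 / √5 * (s / √D)) ^ 2 =
      4 * (5 * N ^ 2 * D - s ^ 2 * B ^ 2) / (5 * D * B ^ 2) := by
  rw [mul_pow, div_pow, div_pow, div_pow, sq_sqrt (by norm_num), sq_sqrt hD.le]
  field_simp
  ring

theorem xy_ineq (x y : ℝ) (hx1 : -1 < x) (hx0 : x < 0) (hy0 : 0 < y) (hy1 : y < 1) :
    (-x)/(2 + x) + y/(2 - y) ≥
      (2/Real.sqrt 5) * ((y - x)/Real.sqrt ((y - x)^2 + 4*(1 + x)*(1 - y))) ∧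
    ((-x)/(2 + x) + y/(2 - y) =
      (2/Real.sqrt 5) * ((y - x)/Real.sqrt ((y - x)^2 + 4*(1 + x)*(1 - y)))
      ↔ x = -1/3 ∧ y = 1/3) := by
  set s := y - x with hs
  set q := (x + y) ^ 2 with hq
  have hs0 : 0 < s := by linarith
  have hs2 : s < 2 := by linarith
  have hq0 : 0 ≤ q := sq_nonneg _
  have hq1 : q ≤ s ^ 2 := by nlinarith
  have hq2 : q ≤ (2 - s) ^ 2 := by nlinarith
  have hB : 0 < (4 - s) ^ 2 - q := by nlinarith
  have hD : 0 < s ^ 2 + (2 - s) ^ 2 - q := by nlinarith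
  have hLHS : (-x) / (2 + x) + y / (2 - y) = 2 * (4 * s - s ^ 2 + q) / ((4 - s) ^ 2 - q) := by
    rw [div_add_div _ _ (by linarith) (by linarith), div_eq_div_iff (by nlinarith) hB.ne']
    ring
  rw [hLHS, show (y - x) ^ 2 + 4 * (1 + x) * (1 - y) = s ^ 2 + (2 - s) ^ 2 - q by ring]
  have hL : 0 ≤ 2 * (4 * s - s ^ 2 + q) / ((4 - s) ^ 2 - q) := by
    have : 0 < 4 * s - s ^ 2 + q := by nlinarith
    positivity
  have hR : 0 ≤ 2 / √5 * (s / √(s ^ 2 + (2 - s) ^ 2 - q)) := by positivity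
  have hdiff := sq_sub_sq_two_div_sqrt_five (4 * s - s ^ 2 + q) ((4 - s) ^ 2 - q) s _ hB.ne' hD
  rw [← gap] at hdiff
  have hden : 0 < 5 * (s ^ 2 + (2 - s) ^ 2 - q) * ((4 - s) ^ 2 - q) ^ 2 := by positivity
  refine ⟨(sq_le_sq₀ hR hL).1 ?_, ?_⟩
  · nlinarith [div_nonneg (mul_nonneg zero_le_four (gap_nonneg hs0 hs2 hq0 hq1 hq2)) hden.le]
  rw [← sq_eq_sq₀ hL hR, ← sub_eq_zero, hdiff, div_eq_zero_iff, mul_eq_zero,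
    or_iff_right four_ne_zero, or_iff_left hden.ne', gap_eq_zero_iff hs0 hs2 hq0 hq1 hq2, hq,
    pow_eq_zero_iff two_ne_zero]
  constructor
  · rintro ⟨h1, h2⟩
    constructor <;> linarith
  · rintro ⟨rfl, rfl⟩
    norm_num
end

section
/- Let A = sinh(x+y), B = sinh x, C = sinh y, b = sinh u, c = sinh v where x, y, u, v ≥ 0 are real, and let a be a real number with 0 ≤ a ≤ sinh(u+v). Then arsinh(√(A² + a²)) ≤ arsinh(√(B² + b²)) + arsinh(√(C² + c²)). -/
set_option maxHeartbeats 1200000 in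
private lemma star_aux (B C b c g h E : ℝ) (hB : 0 ≤ B) (hC : 0 ≤ C) (hb : 0 ≤ b) (hc : 0 ≤ c)
    (hg2 : g ^ 2 = (1 + B ^ 2) * (1 + C ^ 2)) (hh2 : h ^ 2 = (1 + b ^ 2) * (1 + c ^ 2))
    (hg : 1 + B * C ≤ g) (hh : 1 + b * c ≤ h) (hE : 0 ≤ E)
    (hE2 : E ^ 2 = (B ^ 2 + b ^ 2) * (C ^ 2 + c ^ 2) * (1 + B ^ 2 + b ^ 2) * (1 + C ^ 2 + c ^ 2)) :
    B * C * g + b * c * h - (B ^ 2 * c ^ 2 + b ^ 2 * C ^ 2) ≤ E := by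
  have hΔ : E ^ 2 - (B * C * g + b * c * h - (B ^ 2 * c ^ 2 + b ^ 2 * C ^ 2)) ^ 2 =
      (C^2*b^2 + 2*C^2*b^2*c^2 + C^2*b^4 + 2*C^2*b^4*c^2 + C^4*b^2 + B^2*c^2 + B^2*c^4
        + 2*B^2*b^2*c^2 + 2*B^2*b^2*c^4 + 2*B^2*C^2*c^2 + 2*B^2*C^2*b^2 + 2*B^2*C^2*b^2*c^2
        + 2*B^2*C^4*b^2 + B^4*c^2 + 2*B^4*C^2*c^2)
      + 2*(B^2*c^2 + b^2*C^2)*(B*C*g + b*c*h) - 2*(B*C*b*c)*(g*h) := by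
    linear_combination hE2 - (B*C)^2 * hg2 - (b*c)^2 * hh2
  have hBC : 0 ≤ B * C := mul_nonneg hB hC
  have hbc : 0 ≤ b * c := mul_nonneg hb hc
  have hgh : g * h ≤ ((1 + B ^ 2) * (1 + C ^ 2) + (1 + b ^ 2) * (1 + c ^ 2)) / 2 := by
    nlinarith [sq_nonneg (g - h)]
  have h3 : 2 * (B * C * b * c) * (g * h) ≤
      (B * C * b * c) * ((1 + B ^ 2) * (1 + C ^ 2) + (1 + b ^ 2) * (1 + c ^ 2)) := by
    have hbcbc : 0 ≤ B * C * b * c := mul_nonneg (mul_nonneg hBC hb) hc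
    nlinarith [mul_le_mul_of_nonneg_left hgh hbcbc]
  have h1 : 2*(B^2*c^2 + b^2*C^2)*(B*C*(1+B*C) + b*c*(1+b*c)) ≤
      2*(B^2*c^2 + b^2*C^2)*(B*C*g + b*c*h) := by
    have e1 : B*C*(1+B*C) ≤ B*C*g := mul_le_mul_of_nonneg_left hg hBC
    have e2 : b*c*(1+b*c) ≤ b*c*h := mul_le_mul_of_nonneg_left hh hbc
    have := mul_le_mul_of_nonneg_left (add_le_add e1 e2)
      (by positivity : (0:ℝ) ≤ 2*(B^2*c^2 + b^2*C^2))
    linarith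
  have hfinal : 0 ≤ (C^2*b^2 + 2*C^2*b^2*c^2 + C^2*b^4 + 2*C^2*b^4*c^2 + C^4*b^2 + B^2*c^2 + B^2*c^4
        + 2*B^2*b^2*c^2 + 2*B^2*b^2*c^4 + 2*B^2*C^2*c^2 + 2*B^2*C^2*b^2 + 2*B^2*C^2*b^2*c^2
        + 2*B^2*C^4*b^2 + B^4*c^2 + 2*B^4*C^2*c^2)
      + 2*(B^2*c^2 + b^2*C^2)*(B*C*(1+B*C) + b*c*(1+b*c))
      - (B*C*b*c)*((1 + B ^ 2) * (1 + C ^ 2) + (1 + b ^ 2) * (1 + c ^ 2)) := by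
    have hodd : 0 ≤ 2*(B*C + b*c)*((C*b)^2 + (B*c)^2) :=
      mul_nonneg (by linarith) (by positivity)
    have heven : (0:ℝ) ≤ (C*b - B*c)^2 + (1/2)*(B*c^2 - C*b*c)^2 + (1/2)*(C*b^2 - B*b*c)^2
        + (1/2)*(C*b^2*c - B*b*c^2)^2 + (1/2)*(C^2*b - B*C*c)^2 + (1/2)*(B^2*c - B*C*b)^2
        + (1/2)*(B^2*C*c - B*C^2*b)^2
        + (3/2)*C^2*b^2*c^2 + (1/2)*C^2*b^4 + (7/2)*C^2*b^4*c^2 + (1/2)*C^4*b^2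
        + (1/2)*B^2*c^4 + (3/2)*B^2*b^2*c^2 + (7/2)*B^2*b^2*c^4 + (3/2)*B^2*C^2*c^2
        + (3/2)*B^2*C^2*b^2 + 2*B^2*C^2*b^2*c^2 + (7/2)*B^2*C^4*b^2 + (1/2)*B^4*c^2
        + (7/2)*B^4*C^2*c^2 := by positivity
    have hid : (C^2*b^2 + 2*C^2*b^2*c^2 + C^2*b^4 + 2*C^2*b^4*c^2 + C^4*b^2 + B^2*c^2 + B^2*c^4
        + 2*B^2*b^2*c^2 + 2*B^2*b^2*c^4 + 2*B^2*C^2*c^2 + 2*B^2*C^2*b^2 + 2*B^2*C^2*b^2*c^2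
        + 2*B^2*C^4*b^2 + B^4*c^2 + 2*B^4*C^2*c^2)
      + 2*(B^2*c^2 + b^2*C^2)*(B*C*(1+B*C) + b*c*(1+b*c))
      - (B*C*b*c)*((1 + B ^ 2) * (1 + C ^ 2) + (1 + b ^ 2) * (1 + c ^ 2))
      = ((C*b - B*c)^2 + (1/2)*(B*c^2 - C*b*c)^2 + (1/2)*(C*b^2 - B*b*c)^2
        + (1/2)*(C*b^2*c - B*b*c^2)^2 + (1/2)*(C^2*b - B*C*c)^2 + (1/2)*(B^2*c - B*C*b)^2
        + (1/2)*(B^2*C*c - B*C^2*b)^2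
        + (3/2)*C^2*b^2*c^2 + (1/2)*C^2*b^4 + (7/2)*C^2*b^4*c^2 + (1/2)*C^4*b^2
        + (1/2)*B^2*c^4 + (3/2)*B^2*b^2*c^2 + (7/2)*B^2*b^2*c^4 + (3/2)*B^2*C^2*c^2
        + (3/2)*B^2*C^2*b^2 + 2*B^2*C^2*b^2*c^2 + (7/2)*B^2*C^4*b^2 + (1/2)*B^4*c^2
        + (7/2)*B^4*C^2*c^2)
      + 2*(B*C + b*c)*((C*b)^2 + (B*c)^2) := by ring
    linarith [hodd, heven, hid.ge, hid.le]
  have hsq : (B * C * g + b * c * h - (B ^ 2 * c ^ 2 + b ^ 2 * C ^ 2)) ^ 2 ≤ E ^ 2 := by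
    linarith [hΔ, h1, h3, hfinal]
  nlinarith [hsq, hE, sq_nonneg (E + (B * C * g + b * c * h - (B ^ 2 * c ^ 2 + b ^ 2 * C ^ 2)))]

set_option maxHeartbeats 1000000 in
theorem arsinh_ineq (x y u v a : ℝ) (hx : 0 ≤ x) (hy : 0 ≤ y) (hu : 0 ≤ u) (hv : 0 ≤ v)
    (ha0 : 0 ≤ a) (ha : a ≤ Real.sinh (u + v)) :
    Real.arsinh (Real.sqrt (Real.sinh (x + y) ^ 2 + a ^ 2)) ≤
      Real.arsinh (Real.sqrt (Real.sinh x ^ 2 + Real.sinh u ^ 2)) +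
      Real.arsinh (Real.sqrt (Real.sinh y ^ 2 + Real.sinh v ^ 2)) := by
  have hB : 0 ≤ Real.sinh x := Real.sinh_nonneg_iff.2 hx
  have hC : 0 ≤ Real.sinh y := Real.sinh_nonneg_iff.2 hy
  have hb : 0 ≤ Real.sinh u := Real.sinh_nonneg_iff.2 hu
  have hc : 0 ≤ Real.sinh v := Real.sinh_nonneg_iff.2 hv
  have hP : (0:ℝ) ≤ Real.sinh x ^ 2 + Real.sinh u ^ 2 := by positivity
  have hQ : (0:ℝ) ≤ Real.sinh y ^ 2 + Real.sinh v ^ 2 := by positivity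
  have hP1 : (0:ℝ) ≤ 1 + (Real.sinh x ^ 2 + Real.sinh u ^ 2) := by positivity
  have hQ1 : (0:ℝ) ≤ 1 + (Real.sinh y ^ 2 + Real.sinh v ^ 2) := by positivity
  rw [show Real.arsinh (Real.sqrt (Real.sinh x ^ 2 + Real.sinh u ^ 2)) +
        Real.arsinh (Real.sqrt (Real.sinh y ^ 2 + Real.sinh v ^ 2)) =
      Real.arsinh (Real.sinh (Real.arsinh (Real.sqrt (Real.sinh x ^ 2 + Real.sinh u ^ 2)) +
        Real.arsinh (Real.sqrt (Real.sinh y ^ 2 + Real.sinh v ^ 2)))) from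
      (Real.arsinh_sinh _).symm, Real.arsinh_le_arsinh,
    Real.sinh_add (Real.arsinh (Real.sqrt (Real.sinh x ^ 2 + Real.sinh u ^ 2)))
      (Real.arsinh (Real.sqrt (Real.sinh y ^ 2 + Real.sinh v ^ 2))), Real.sinh_arsinh,
    Real.sinh_arsinh, Real.cosh_arsinh, Real.cosh_arsinh, Real.sq_sqrt hP, Real.sq_sqrt hQ]
  set R := Real.sqrt (Real.sinh x ^ 2 + Real.sinh u ^ 2) *
      Real.sqrt (1 + (Real.sinh y ^ 2 + Real.sinh v ^ 2)) +
      Real.sqrt (1 + (Real.sinh x ^ 2 + Real.sinh u ^ 2)) *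
      Real.sqrt (Real.sinh y ^ 2 + Real.sinh v ^ 2) with hRdef
  have hR : 0 ≤ R := by rw [hRdef]; positivity
  set E := Real.sqrt (Real.sinh x ^ 2 + Real.sinh u ^ 2) *
      Real.sqrt (Real.sinh y ^ 2 + Real.sinh v ^ 2) *
      Real.sqrt (1 + (Real.sinh x ^ 2 + Real.sinh u ^ 2)) *
      Real.sqrt (1 + (Real.sinh y ^ 2 + Real.sinh v ^ 2)) with hEdef
  have hE : 0 ≤ E := by rw [hEdef]; positivity
  have hE2 : E ^ 2 = (Real.sinh x ^ 2 + Real.sinh u ^ 2) * (Real.sinh y ^ 2 + Real.sinh v ^ 2) *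
      (1 + Real.sinh x ^ 2 + Real.sinh u ^ 2) * (1 + Real.sinh y ^ 2 + Real.sinh v ^ 2) := by
    rw [hEdef, mul_pow, mul_pow, mul_pow, Real.sq_sqrt hP, Real.sq_sqrt hQ,
      Real.sq_sqrt hP1, Real.sq_sqrt hQ1]
    ring
  have hR2 : R ^ 2 = (Real.sinh x ^ 2 + Real.sinh u ^ 2) *
      (1 + (Real.sinh y ^ 2 + Real.sinh v ^ 2)) +
      (1 + (Real.sinh x ^ 2 + Real.sinh u ^ 2)) * (Real.sinh y ^ 2 + Real.sinh v ^ 2)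
      + 2 * E := by
    rw [hRdef, hEdef, add_sq, mul_pow, mul_pow, Real.sq_sqrt hP,
      Real.sq_sqrt hQ, Real.sq_sqrt hP1, Real.sq_sqrt hQ1]
    ring
  have hcx : Real.cosh x ^ 2 = Real.sinh x ^ 2 + 1 := Real.cosh_sq x
  have hcy : Real.cosh y ^ 2 = Real.sinh y ^ 2 + 1 := Real.cosh_sq y
  have hcu : Real.cosh u ^ 2 = Real.sinh u ^ 2 + 1 := Real.cosh_sq u
  have hcv : Real.cosh v ^ 2 = Real.sinh v ^ 2 + 1 := Real.cosh_sq v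
  have hg2 : (Real.cosh x * Real.cosh y) ^ 2 = (1 + Real.sinh x ^ 2) * (1 + Real.sinh y ^ 2) := by
    rw [mul_pow, hcx, hcy]; ring
  have hh2 : (Real.cosh u * Real.cosh v) ^ 2 = (1 + Real.sinh u ^ 2) * (1 + Real.sinh v ^ 2) := by
    rw [mul_pow, hcu, hcv]; ring
  have hgpos : 0 ≤ Real.cosh x * Real.cosh y := by positivity
  have hhpos : 0 ≤ Real.cosh u * Real.cosh v := by positivity
  have hg1 : 1 + Real.sinh x * Real.sinh y ≤ Real.cosh x * Real.cosh y := by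
    nlinarith [sq_nonneg (Real.sinh x - Real.sinh y), mul_nonneg hB hC]
  have hh1 : 1 + Real.sinh u * Real.sinh v ≤ Real.cosh u * Real.cosh v := by
    nlinarith [sq_nonneg (Real.sinh u - Real.sinh v), mul_nonneg hb hc]
  have key := star_aux (Real.sinh x) (Real.sinh y) (Real.sinh u) (Real.sinh v)
    (Real.cosh x * Real.cosh y) (Real.cosh u * Real.cosh v) E hB hC hb hc hg2 hh2 hg1 hh1 hE hE2
  have hA2 : Real.sinh (x + y) ^ 2 = Real.sinh x ^ 2 * (1 + Real.sinh y ^ 2) +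
      Real.sinh y ^ 2 * (1 + Real.sinh x ^ 2) +
      2 * (Real.sinh x * Real.sinh y) * (Real.cosh x * Real.cosh y) := by
    rw [Real.sinh_add]
    linear_combination (Real.sinh x) ^ 2 * hcy + (Real.sinh y) ^ 2 * hcx
  have ha' : a ≤ Real.sinh u * Real.cosh v + Real.cosh u * Real.sinh v := by
    rwa [Real.sinh_add] at ha
  have ha2 : a ^ 2 ≤ Real.sinh u ^ 2 * (1 + Real.sinh v ^ 2) +
      Real.sinh v ^ 2 * (1 + Real.sinh u ^ 2) +
      2 * (Real.sinh u * Real.sinh v) * (Real.cosh u * Real.cosh v) := by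
    have h0 : a ^ 2 ≤ (Real.sinh u * Real.cosh v + Real.cosh u * Real.sinh v) ^ 2 :=
      pow_le_pow_left₀ ha0 ha' 2
    calc a ^ 2 ≤ (Real.sinh u * Real.cosh v + Real.cosh u * Real.sinh v) ^ 2 := h0
      _ = Real.sinh u ^ 2 * (1 + Real.sinh v ^ 2) + Real.sinh v ^ 2 * (1 + Real.sinh u ^ 2) +
          2 * (Real.sinh u * Real.sinh v) * (Real.cosh u * Real.cosh v) := by
        linear_combination (Real.sinh u) ^ 2 * hcv + (Real.sinh v) ^ 2 * hcu
  have main2 : Real.sinh (x + y) ^ 2 + a ^ 2 ≤ R ^ 2 := by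
    rw [hR2]; nlinarith [key, hA2, ha2]
  calc Real.sqrt (Real.sinh (x + y) ^ 2 + a ^ 2) ≤ Real.sqrt (R ^ 2) :=
        Real.sqrt_le_sqrt main2
    _ = R := Real.sqrt_sq hR
end

section
/- Let A = sinh(x+y), B = sinh x, C = sinh y, b = sinh u, c = sinh v where x, y, u, v ≥ 0, and let 0 ≤ a ≤ sinh(u+v). Then √((A² + a²)/(1 + A² + a²)) ≤ √((B² + b²)/(1 + B² + b²)) + √((C² + c²)/(1 + C² + c²)). -/
private lemma le_of_sq_le' (a b : ℝ) (ha : 0 ≤ a) (hb : 0 ≤ b) (h : a ^ 2 ≤ b ^ 2) : a ≤ b := by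
  nlinarith

private lemma mono_aux (t w A : ℝ) (h0 : 0 ≤ t) (h1 : t ≤ w) :
    (A ^ 2 + t ^ 2) * (1 + A ^ 2 + w ^ 2) ≤ (A ^ 2 + w ^ 2) * (1 + A ^ 2 + t ^ 2) := by
  nlinarith [mul_self_le_mul_self h0 h1]

private lemma cs_aux1 (B b C c B' b' C' c' : ℝ) :
    (B * B' * (C * C') + b * b' * (c * c')) ^ 2 ≤
      ((B * B') ^ 2 + (b * b') ^ 2) * ((C * C') ^ 2 + (c * c') ^ 2) := by
  nlinarith [sq_nonneg (B * B' * (c * c') - b * b' * (C * C'))]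

private lemma cs_aux2 (B b B' b' : ℝ) (hB'2 : B' ^ 2 = 1 + B ^ 2) (hb'2 : b' ^ 2 = 1 + b ^ 2) :
    (B * B') ^ 2 + (b * b') ^ 2 ≤ (B ^ 2 + b ^ 2) * (1 + B ^ 2 + b ^ 2) := by
  nlinarith [sq_nonneg (B * b), hB'2, hb'2]

private lemma key_poly (B b C c X Y Z : ℝ) (h : X + Y ≤ Z) :
    1 + (B ^ 2 * (1 + C ^ 2) + (1 + B ^ 2) * C ^ 2 + 2 * X) +
      (b ^ 2 * (1 + c ^ 2) + (1 + b ^ 2) * c ^ 2 + 2 * Y) ≤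
    (1 + B ^ 2 + b ^ 2) * (1 + C ^ 2 + c ^ 2) + (B ^ 2 + b ^ 2) * (C ^ 2 + c ^ 2) + 2 * Z := by
  nlinarith [sq_nonneg (B * c), sq_nonneg (b * C)]

private lemma main_aux (p c1 q c2 sS cS : ℝ) (hp : 0 ≤ p) (hq : 0 ≤ q)
    (hc1 : 1 ≤ c1) (hc2 : 1 ≤ c2) (hcS : 1 ≤ cS) (hsS : 0 ≤ sS)
    (h1 : c1 ^ 2 = 1 + p ^ 2) (h2 : c2 ^ 2 = 1 + q ^ 2) (hS2 : cS ^ 2 = 1 + sS ^ 2)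
    (hkey : cS ≤ c1 * c2 + p * q) : sS / cS ≤ p / c1 + q / c2 := by
  have hc1p : (0:ℝ) < c1 := by linarith
  have hc2p : (0:ℝ) < c2 := by linarith
  have hcSp : (0:ℝ) < cS := by linarith
  have hWp : (0:ℝ) < c1 * c2 + p * q := by nlinarith
  have hWm1 : (c1 * c2 + p * q) ^ 2 - 1 = (p * c2 + c1 * q) ^ 2 := by
    linear_combination (c2 ^ 2 - q ^ 2) * h1 + h2
  have step2 : sS / cS ≤ (p * c2 + c1 * q) / (c1 * c2 + p * q) := by
    rw [div_le_div_iff₀ hcSp hWp]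
    apply le_of_sq_le' _ _ (by positivity) (by positivity)
    have e1 : (sS * (c1 * c2 + p * q)) ^ 2 = (cS ^ 2 - 1) * (c1 * c2 + p * q) ^ 2 := by
      rw [hS2]; ring
    have e2 : ((p * c2 + c1 * q) * cS) ^ 2 = ((c1 * c2 + p * q) ^ 2 - 1) * cS ^ 2 := by
      rw [hWm1]; ring
    rw [e1, e2]
    nlinarith [hkey, hcSp, hWp]
  refine step2.trans ?_
  rw [div_add_div _ _ (ne_of_gt hc1p) (ne_of_gt hc2p), div_le_div_iff₀ hWp (by positivity)]
  nlinarith [mul_nonneg (add_nonneg (mul_nonneg hp hc2p.le) (mul_nonneg hc1p.le hq))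
    (mul_nonneg hp hq)]

set_option maxHeartbeats 1000000 in
theorem sqrt_ratio_ineq (x y u v a : ℝ) (hx : 0 ≤ x) (hy : 0 ≤ y) (hu : 0 ≤ u) (hv : 0 ≤ v)
    (ha0 : 0 ≤ a) (ha : a ≤ Real.sinh (u + v)) :
    Real.sqrt ((Real.sinh (x + y) ^ 2 + a ^ 2) / (1 + Real.sinh (x + y) ^ 2 + a ^ 2)) ≤
      Real.sqrt ((Real.sinh x ^ 2 + Real.sinh u ^ 2) / (1 + Real.sinh x ^ 2 + Real.sinh u ^ 2)) +
      Real.sqrt ((Real.sinh y ^ 2 + Real.sinh v ^ 2) / (1 + Real.sinh y ^ 2 + Real.sinh v ^ 2)) := by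
  set B := Real.sinh x with hBdef
  set b := Real.sinh u with hbdef
  set C := Real.sinh y with hCdef
  set c := Real.sinh v with hcdef
  set B' := Real.cosh x with hB'def
  set b' := Real.cosh u with hb'def
  set C' := Real.cosh y with hC'def
  set c' := Real.cosh v with hc'def
  have hB : 0 ≤ B := Real.sinh_nonneg_iff.2 hx
  have hb : 0 ≤ b := Real.sinh_nonneg_iff.2 hu
  have hC : 0 ≤ C := Real.sinh_nonneg_iff.2 hy
  have hc : 0 ≤ c := Real.sinh_nonneg_iff.2 hv
  have hB'2 : B' ^ 2 = 1 + B ^ 2 := Real.cosh_sq' x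
  have hb'2 : b' ^ 2 = 1 + b ^ 2 := Real.cosh_sq' u
  have hC'2 : C' ^ 2 = 1 + C ^ 2 := Real.cosh_sq' y
  have hc'2 : c' ^ 2 = 1 + c ^ 2 := Real.cosh_sq' v
  have hB' : (1:ℝ) ≤ B' := Real.one_le_cosh x
  have hb' : (1:ℝ) ≤ b' := Real.one_le_cosh u
  have hC' : (1:ℝ) ≤ C' := Real.one_le_cosh y
  have hc' : (1:ℝ) ≤ c' := Real.one_le_cosh v
  have hA : Real.sinh (x + y) = B * C' + B' * C := Real.sinh_add x y
  have hs : Real.sinh (u + v) = b * c' + b' * c := Real.sinh_add u v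
  set A := Real.sinh (x + y) with hAdef
  set s := Real.sinh (u + v) with hsdef
  have hAnn : 0 ≤ A := Real.sinh_nonneg_iff.2 (by linarith)
  have hsnn : 0 ≤ s := Real.sinh_nonneg_iff.2 (by linarith)
  clear_value B b C c B' b' C' c' A s
  clear hBdef hbdef hCdef hcdef hB'def hb'def hC'def hc'def hAdef hsdef
  -- Step 1: replace a by s
  have step1 : Real.sqrt ((A ^ 2 + a ^ 2) / (1 + A ^ 2 + a ^ 2)) ≤
      Real.sqrt ((A ^ 2 + s ^ 2) / (1 + A ^ 2 + s ^ 2)) := by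
    apply Real.sqrt_le_sqrt
    rw [div_le_div_iff₀ (by positivity) (by positivity)]
    exact mono_aux a s A ha0 ha
  refine step1.trans ?_
  clear step1 ha ha0
  -- rewrite all three square roots as quotients
  have e0 : Real.sqrt ((A ^ 2 + s ^ 2) / (1 + A ^ 2 + s ^ 2)) =
      Real.sqrt (A ^ 2 + s ^ 2) / Real.sqrt (1 + A ^ 2 + s ^ 2) :=
    Real.sqrt_div (show (0:ℝ) ≤ A ^ 2 + s ^ 2 by positivity) _
  have e1 : Real.sqrt ((B ^ 2 + b ^ 2) / (1 + B ^ 2 + b ^ 2)) =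
      Real.sqrt (B ^ 2 + b ^ 2) / Real.sqrt (1 + B ^ 2 + b ^ 2) :=
    Real.sqrt_div (show (0:ℝ) ≤ B ^ 2 + b ^ 2 by positivity) _
  have e2 : Real.sqrt ((C ^ 2 + c ^ 2) / (1 + C ^ 2 + c ^ 2)) =
      Real.sqrt (C ^ 2 + c ^ 2) / Real.sqrt (1 + C ^ 2 + c ^ 2) :=
    Real.sqrt_div (show (0:ℝ) ≤ C ^ 2 + c ^ 2 by positivity) _
  rw [e0, e1, e2]
  clear e0 e1 e2
  -- values of the squares
  have sp2 : Real.sqrt (B ^ 2 + b ^ 2) ^ 2 = B ^ 2 + b ^ 2 :=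
    Real.sq_sqrt (show (0:ℝ) ≤ B ^ 2 + b ^ 2 by positivity)
  have cp2 : Real.sqrt (1 + B ^ 2 + b ^ 2) ^ 2 = 1 + B ^ 2 + b ^ 2 :=
    Real.sq_sqrt (show (0:ℝ) ≤ 1 + B ^ 2 + b ^ 2 by positivity)
  have sq2 : Real.sqrt (C ^ 2 + c ^ 2) ^ 2 = C ^ 2 + c ^ 2 :=
    Real.sq_sqrt (show (0:ℝ) ≤ C ^ 2 + c ^ 2 by positivity)
  have cq2 : Real.sqrt (1 + C ^ 2 + c ^ 2) ^ 2 = 1 + C ^ 2 + c ^ 2 :=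
    Real.sq_sqrt (show (0:ℝ) ≤ 1 + C ^ 2 + c ^ 2 by positivity)
  have ss2 : Real.sqrt (A ^ 2 + s ^ 2) ^ 2 = A ^ 2 + s ^ 2 :=
    Real.sq_sqrt (show (0:ℝ) ≤ A ^ 2 + s ^ 2 by positivity)
  have cs2 : Real.sqrt (1 + A ^ 2 + s ^ 2) ^ 2 = 1 + A ^ 2 + s ^ 2 :=
    Real.sq_sqrt (show (0:ℝ) ≤ 1 + A ^ 2 + s ^ 2 by positivity)
  have one_le_sqrt : ∀ t : ℝ, 1 ≤ t → 1 ≤ Real.sqrt t := fun t ht => by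
    rw [show (1:ℝ) = Real.sqrt 1 from Real.sqrt_one.symm]
    exact Real.sqrt_le_sqrt ht
  have cp1 : 1 ≤ Real.sqrt (1 + B ^ 2 + b ^ 2) :=
    one_le_sqrt _ (by nlinarith [sq_nonneg B, sq_nonneg b])
  have cq1 : 1 ≤ Real.sqrt (1 + C ^ 2 + c ^ 2) :=
    one_le_sqrt _ (by nlinarith [sq_nonneg C, sq_nonneg c])
  have cs1 : 1 ≤ Real.sqrt (1 + A ^ 2 + s ^ 2) :=
    one_le_sqrt _ (by nlinarith [sq_nonneg A, sq_nonneg s])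
  -- Cauchy-Schwarz product bound
  have hprod : B * B' * (C * C') + b * b' * (c * c') ≤
      Real.sqrt (B ^ 2 + b ^ 2) * Real.sqrt (C ^ 2 + c ^ 2) *
        (Real.sqrt (1 + B ^ 2 + b ^ 2) * Real.sqrt (1 + C ^ 2 + c ^ 2)) := by
    apply le_of_sq_le' _ _ (by positivity) (by positivity)
    have expand : (Real.sqrt (B ^ 2 + b ^ 2) * Real.sqrt (C ^ 2 + c ^ 2) *
        (Real.sqrt (1 + B ^ 2 + b ^ 2) * Real.sqrt (1 + C ^ 2 + c ^ 2))) ^ 2 =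
        Real.sqrt (B ^ 2 + b ^ 2) ^ 2 * Real.sqrt (C ^ 2 + c ^ 2) ^ 2 *
        (Real.sqrt (1 + B ^ 2 + b ^ 2) ^ 2 * Real.sqrt (1 + C ^ 2 + c ^ 2) ^ 2) := by ring
    rw [expand, sp2, cp2, sq2, cq2]
    calc (B * B' * (C * C') + b * b' * (c * c')) ^ 2
        ≤ ((B * B') ^ 2 + (b * b') ^ 2) * ((C * C') ^ 2 + (c * c') ^ 2) :=
          cs_aux1 B b C c B' b' C' c'
      _ ≤ (B ^ 2 + b ^ 2) * (1 + B ^ 2 + b ^ 2) * ((C ^ 2 + c ^ 2) * (1 + C ^ 2 + c ^ 2)) := by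
          apply mul_le_mul (cs_aux2 B b B' b' hB'2 hb'2) (cs_aux2 C c C' c' hC'2 hc'2)
            (by positivity) (by positivity)
      _ = (B ^ 2 + b ^ 2) * (C ^ 2 + c ^ 2) * ((1 + B ^ 2 + b ^ 2) * (1 + C ^ 2 + c ^ 2)) := by
          ring
  -- expansions of A and s squared
  have eA : A ^ 2 = B ^ 2 * C' ^ 2 + B' ^ 2 * C ^ 2 + 2 * (B * B' * (C * C')) := by
    rw [hA]; ring
  rw [hC'2, hB'2] at eA
  have es : s ^ 2 = b ^ 2 * c' ^ 2 + b' ^ 2 * c ^ 2 + 2 * (b * b' * (c * c')) := by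
    rw [hs]; ring
  rw [hc'2, hb'2] at es
  -- Key inequality
  have hkey : Real.sqrt (1 + A ^ 2 + s ^ 2) ≤
      Real.sqrt (1 + B ^ 2 + b ^ 2) * Real.sqrt (1 + C ^ 2 + c ^ 2) +
      Real.sqrt (B ^ 2 + b ^ 2) * Real.sqrt (C ^ 2 + c ^ 2) := by
    apply le_of_sq_le' _ _ (Real.sqrt_nonneg _) (by positivity)
    rw [cs2]
    have expand : (Real.sqrt (1 + B ^ 2 + b ^ 2) * Real.sqrt (1 + C ^ 2 + c ^ 2) +
        Real.sqrt (B ^ 2 + b ^ 2) * Real.sqrt (C ^ 2 + c ^ 2)) ^ 2 =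
        Real.sqrt (1 + B ^ 2 + b ^ 2) ^ 2 * Real.sqrt (1 + C ^ 2 + c ^ 2) ^ 2 +
        Real.sqrt (B ^ 2 + b ^ 2) ^ 2 * Real.sqrt (C ^ 2 + c ^ 2) ^ 2 +
        2 * (Real.sqrt (B ^ 2 + b ^ 2) * Real.sqrt (C ^ 2 + c ^ 2) *
          (Real.sqrt (1 + B ^ 2 + b ^ 2) * Real.sqrt (1 + C ^ 2 + c ^ 2))) := by ring
    rw [expand, sp2, cp2, sq2, cq2]
    calc 1 + A ^ 2 + s ^ 2
        = 1 + (B ^ 2 * (1 + C ^ 2) + (1 + B ^ 2) * C ^ 2 + 2 * (B * B' * (C * C'))) +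
          (b ^ 2 * (1 + c ^ 2) + (1 + b ^ 2) * c ^ 2 + 2 * (b * b' * (c * c'))) := by
          rw [eA, es]
      _ ≤ (1 + B ^ 2 + b ^ 2) * (1 + C ^ 2 + c ^ 2) + (B ^ 2 + b ^ 2) * (C ^ 2 + c ^ 2) +
          2 * (Real.sqrt (B ^ 2 + b ^ 2) * Real.sqrt (C ^ 2 + c ^ 2) *
            (Real.sqrt (1 + B ^ 2 + b ^ 2) * Real.sqrt (1 + C ^ 2 + c ^ 2))) :=
          key_poly B b C c _ _ _ hprod
  -- conclude via main_aux
  have sqq2 : Real.sqrt (1 + B ^ 2 + b ^ 2) ^ 2 = 1 + Real.sqrt (B ^ 2 + b ^ 2) ^ 2 := by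
    rw [cp2, sp2]; ring
  have sqq2' : Real.sqrt (1 + C ^ 2 + c ^ 2) ^ 2 = 1 + Real.sqrt (C ^ 2 + c ^ 2) ^ 2 := by
    rw [cq2, sq2]; ring
  have sqq2'' : Real.sqrt (1 + A ^ 2 + s ^ 2) ^ 2 = 1 + Real.sqrt (A ^ 2 + s ^ 2) ^ 2 := by
    rw [cs2, ss2]; ring
  exact main_aux _ _ _ _ _ _ (Real.sqrt_nonneg _) (Real.sqrt_nonneg _) cp1 cq1 cs1
    (Real.sqrt_nonneg _) sqq2 sqq2' sqq2'' hkey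
end

section
/- For all nonnegative reals x, y, u, v, the inequality √(sinh²(x+y) + sinh²(u+v)) ≤ √(sinh²x + sinh²u)·√(1 + sinh²y + sinh²v) + √(sinh²y + sinh²v)·√(1 + sinh²x + sinh²u) holds. -/
/-!
Expand `sinh (x + y) = sinh x cosh y + cosh x sinh y` and likewise for `u + v`. The triangle
inequality in `ℝ²` splits the left-hand side into the norms of `(sinh x cosh y, sinh u cosh v)`
and `(cosh x sinh y, cosh u sinh v)`, and each of these is bounded by the corresponding product
on the right using `cosh² = 1 + sinh²`.
-/

open Real

theorem sqrt_add_sq_add_sq_le (a b c d : ℝ) :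
    √((a + b) ^ 2 + (c + d) ^ 2) ≤ √(a ^ 2 + c ^ 2) + √(b ^ 2 + d ^ 2) := by
  have h : ‖(⟨a + b, c + d⟩ : ℂ)‖ ≤ ‖(⟨a, c⟩ : ℂ)‖ + ‖(⟨b, d⟩ : ℂ)‖ :=
    norm_add_le (⟨a, c⟩ : ℂ) ⟨b, d⟩
  simpa only [Complex.norm_def, Complex.normSq_mk, ← sq] using h

theorem sqrt_sq_mul_cosh_add_sq_mul_cosh_le (a c s t : ℝ) :
    √((a * cosh s) ^ 2 + (c * cosh t) ^ 2) ≤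
      √(a ^ 2 + c ^ 2) * √(1 + sinh s ^ 2 + sinh t ^ 2) := by
  rw [← sqrt_mul (by positivity)]
  apply sqrt_le_sqrt
  rw [mul_pow, mul_pow, cosh_sq' s, cosh_sq' t]
  nlinarith [sq_nonneg (a * sinh t), sq_nonneg (c * sinh s)]

theorem sinh_sqrt_ineq_general (x y u v : ℝ) :
    Real.sqrt (Real.sinh (x + y) ^ 2 + Real.sinh (u + v) ^ 2) ≤
      Real.sqrt (Real.sinh x ^ 2 + Real.sinh u ^ 2) *
        Real.sqrt (1 + Real.sinh y ^ 2 + Real.sinh v ^ 2) +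
      Real.sqrt (Real.sinh y ^ 2 + Real.sinh v ^ 2) *
        Real.sqrt (1 + Real.sinh x ^ 2 + Real.sinh u ^ 2) := by
  rw [sinh_add, sinh_add, mul_comm (cosh x), mul_comm (cosh u)]
  exact (sqrt_add_sq_add_sq_le _ _ _ _).trans <| add_le_add
    (sqrt_sq_mul_cosh_add_sq_mul_cosh_le _ _ _ _) (sqrt_sq_mul_cosh_add_sq_mul_cosh_le _ _ _ _)

theorem sinh_sqrt_ineq (x y u v : ℝ) (hx : 0 ≤ x) (hy : 0 ≤ y) (hu : 0 ≤ u) (hv : 0 ≤ v) :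
    Real.sqrt (Real.sinh (x + y) ^ 2 + Real.sinh (u + v) ^ 2) ≤
      Real.sqrt (Real.sinh x ^ 2 + Real.sinh u ^ 2) *
        Real.sqrt (1 + Real.sinh y ^ 2 + Real.sinh v ^ 2) +
      Real.sqrt (Real.sinh y ^ 2 + Real.sinh v ^ 2) *
        Real.sqrt (1 + Real.sinh x ^ 2 + Real.sinh u ^ 2) :=
  sinh_sqrt_ineq_general x y u v
end

section
/- Suppose A, B, C > 0 and a, b, c ≥ 0 are real numbers such that A/√(1+A²) ≤ B/√(1+B²) + C/√(1+C²) and a ≤ b + c. Then √((A² + a²)/(1 + A² + a²)) ≤ √((B² + b²)/(1 + B² + b²)) + √((C² + c²)/(1 + C² + c²)). -/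
lemma one_sub_pos' {p q : ℝ} (hp : 0 ≤ p) (hp1 : p < 1) (hq : 0 ≤ q) (hq1 : q < 1) :
    0 < 1 - p^2*q^2 := by
  have h : p*q < 1 := lt_of_le_of_lt (mul_le_of_le_one_right hp hq1.le) hp1
  nlinarith [mul_nonneg hp hq]

lemma one_sub_sq_nonneg {p : ℝ} (hp : 0 ≤ p) (hp1 : p ≤ 1) : (0:ℝ) ≤ 1 - p^2 := by
  have h := pow_le_pow_left₀ hp hp1 2
  rw [one_pow] at h
  linarith

/-- The inner algebraic identity: expressing `(x²+y²)/(1+x²+y²)` in terms of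
`p = x/√(1+x²)` and `q = y/√(1+y²)`. -/
lemma arg_id (x y : ℝ) :
    ((x / Real.sqrt (1 + x^2))^2 + (y / Real.sqrt (1 + y^2))^2
        - 2 * (x / Real.sqrt (1 + x^2))^2 * (y / Real.sqrt (1 + y^2))^2) /
      (1 - (x / Real.sqrt (1 + x^2))^2 * (y / Real.sqrt (1 + y^2))^2)
      = (x^2 + y^2) / (1 + x^2 + y^2) := by
  have h1 : (0:ℝ) < 1 + x^2 := by positivity
  have h2 : (0:ℝ) < 1 + y^2 := by positivity
  have hs1 : Real.sqrt (1 + x^2) ^ 2 = 1 + x^2 := Real.sq_sqrt h1.le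
  have hs2 : Real.sqrt (1 + y^2) ^ 2 = 1 + y^2 := Real.sq_sqrt h2.le
  rw [div_pow, div_pow, hs1, hs2]
  rw [show 1 - x^2 / (1+x^2) * (y^2 / (1+y^2))
      = (1 + x^2 + y^2) / ((1+x^2) * (1+y^2)) by field_simp; ring]
  rw [show x^2 / (1+x^2) + y^2 / (1+y^2) - 2 * (x^2 / (1+x^2)) * (y^2 / (1+y^2))
      = (x^2 + y^2) / ((1+x^2) * (1+y^2)) by field_simp; ring]
  rw [div_div_div_cancel_right₀ (by positivity : ((1+x^2) * (1+y^2) : ℝ) ≠ 0)]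

/-- Monotonicity of `(p²+q²-2p²q²)/(1-p²q²)` in `p`. -/
lemma frac_mono (p p' q : ℝ) (hp : 0 ≤ p) (hpp : p ≤ p') (hp' : p' < 1)
    (hq : 0 ≤ q) (hq1 : q < 1) :
    (p^2 + q^2 - 2*p^2*q^2) / (1 - p^2*q^2)
      ≤ (p'^2 + q^2 - 2*p'^2*q^2) / (1 - p'^2*q^2) := by
  have hD : 0 < 1 - p^2*q^2 := one_sub_pos' hp (lt_of_le_of_lt hpp hp') hq hq1
  have hD' : 0 < 1 - p'^2*q^2 := one_sub_pos' (hp.trans hpp) hp' hq hq1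
  rw [div_le_div_iff₀ hD hD']
  have e0 : p^2 ≤ p'^2 := pow_le_pow_left₀ hp hpp 2
  have ht : (0:ℝ) ≤ (p'^2 - p^2) * (1 - q^2)^2 :=
    mul_nonneg (by linarith) (sq_nonneg _)
  have hid : (p'^2 + q^2 - 2*p'^2*q^2) * (1 - p^2*q^2)
      - (p^2 + q^2 - 2*p^2*q^2) * (1 - p'^2*q^2)
      = (p'^2 - p^2) * (1 - q^2)^2 := by ring
  linarith [hid, ht]

/-- The tangent-plane bound. -/
lemma tangent (P Q p q : ℝ) (hp : 0 ≤ p) (hpP : p ≤ P) (hq : 0 ≤ q) (hqQ : q ≤ Q)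
    (hP : P < 1) (hQ : Q < 1) :
    (1-Q^2)/(1-P^2*Q^2)*p^2 + (1-P^2)/(1-P^2*Q^2)*q^2
      ≤ (p^2 + q^2 - 2*p^2*q^2) / (1 - p^2*q^2) := by
  have hP0 : 0 ≤ P := hp.trans hpP
  have hQ0 : 0 ≤ Q := hq.trans hqQ
  have hDP : 0 < 1 - P^2*Q^2 := one_sub_pos' hP0 hP hQ0 hQ
  have hD : 0 < 1 - p^2*q^2 :=
    one_sub_pos' hp (lt_of_le_of_lt hpP hP) hq (lt_of_le_of_lt hqQ hQ)
  have hP2 : (0:ℝ) ≤ 1 - P^2 := one_sub_sq_nonneg hP0 hP.le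
  have hQ2 : (0:ℝ) ≤ 1 - Q^2 := one_sub_sq_nonneg hQ0 hQ.le
  have heq : (1-Q^2)/(1-P^2*Q^2)*p^2 + (1-P^2)/(1-P^2*Q^2)*q^2
      = ((1 - Q^2)*p^2 + (1 - P^2)*q^2) / (1 - P^2*Q^2) := by ring
  rw [heq, div_le_div_iff₀ hDP hD]
  have e1 : q^2 ≤ Q^2 := pow_le_pow_left₀ hq hqQ 2
  have e2 : p^2 ≤ P^2 := pow_le_pow_left₀ hp hpP 2
  have e3 : (0:ℝ) ≤ 1 - q^2 := one_sub_sq_nonneg hq (by linarith)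
  have e4 : (0:ℝ) ≤ 1 - p^2 := one_sub_sq_nonneg hp (by linarith)
  have ht1 : (0:ℝ) ≤ (1 - P^2) * p^2 * (Q^2 - q^2) * (1 - q^2) :=
    mul_nonneg (mul_nonneg (mul_nonneg hP2 (sq_nonneg p)) (by linarith)) e3
  have ht2 : (0:ℝ) ≤ (1 - Q^2) * q^2 * (P^2 - p^2) * (1 - p^2) :=
    mul_nonneg (mul_nonneg (mul_nonneg hQ2 (sq_nonneg q)) (by linarith)) e4
  have hid : (p^2 + q^2 - 2*p^2*q^2) * (1 - P^2*Q^2)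
      - ((1 - Q^2)*p^2 + (1 - P^2)*q^2) * (1 - p^2*q^2)
      = (1 - P^2) * p^2 * (Q^2 - q^2) * (1 - q^2)
        + (1 - Q^2) * q^2 * (P^2 - p^2) * (1 - p^2) := by ring
  linarith [hid, ht1, ht2]

/-- Weighted two-dimensional Minkowski inequality. -/
lemma minkow (γ δ u₁ v₁ u₂ v₂ : ℝ) (hγ : 0 ≤ γ) (hδ : 0 ≤ δ) :
    Real.sqrt (γ*(u₁+u₂)^2 + δ*(v₁+v₂)^2)
      ≤ Real.sqrt (γ*u₁^2 + δ*v₁^2) + Real.sqrt (γ*u₂^2 + δ*v₂^2) := by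
  have hx₁sq : Real.sqrt (γ*u₁^2 + δ*v₁^2)^2 = γ*u₁^2 + δ*v₁^2 :=
    Real.sq_sqrt (by positivity)
  have hx₂sq : Real.sqrt (γ*u₂^2 + δ*v₂^2)^2 = γ*u₂^2 + δ*v₂^2 :=
    Real.sq_sqrt (by positivity)
  set x₁ := Real.sqrt (γ*u₁^2 + δ*v₁^2) with hx₁def
  set x₂ := Real.sqrt (γ*u₂^2 + δ*v₂^2) with hx₂def
  have hx₁0 : 0 ≤ x₁ := Real.sqrt_nonneg _
  have hx₂0 : 0 ≤ x₂ := Real.sqrt_nonneg _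
  have cauchy : γ*(u₁*u₂) + δ*(v₁*v₂) ≤ x₁*x₂ := by
    have hmul : x₁*x₂ = Real.sqrt ((γ*u₁^2 + δ*v₁^2) * (γ*u₂^2 + δ*v₂^2)) := by
      rw [hx₁def, hx₂def, ← Real.sqrt_mul (by positivity)]
    have hcs : (γ*(u₁*u₂) + δ*(v₁*v₂))^2 ≤ (γ*u₁^2 + δ*v₁^2) * (γ*u₂^2 + δ*v₂^2) := by
      nlinarith [mul_nonneg (mul_nonneg hγ hδ) (sq_nonneg (u₁*v₂ - u₂*v₁))]
    calc γ*(u₁*u₂) + δ*(v₁*v₂)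
        ≤ Real.sqrt ((γ*(u₁*u₂) + δ*(v₁*v₂))^2) := Real.le_sqrt_of_sq_le (le_refl _)
      _ ≤ _ := by rw [hmul]; exact Real.sqrt_le_sqrt hcs
  have hexp : γ*(u₁+u₂)^2 + δ*(v₁+v₂)^2 ≤ (x₁ + x₂)^2 := by
    have hsq : (x₁ + x₂)^2 = x₁^2 + 2*(x₁*x₂) + x₂^2 := by ring
    rw [hsq, hx₁sq, hx₂sq]
    nlinarith [cauchy]
  calc Real.sqrt (γ*(u₁+u₂)^2 + δ*(v₁+v₂)^2) ≤ Real.sqrt ((x₁ + x₂)^2) :=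
      Real.sqrt_le_sqrt hexp
    _ = x₁ + x₂ := Real.sqrt_sq (by positivity)

/-- The key subadditivity lemma. -/
lemma key_lemma (p₁ q₁ p₂ q₂ : ℝ) (hp₁ : 0 ≤ p₁) (hq₁ : 0 ≤ q₁) (hp₂ : 0 ≤ p₂)
    (hq₂ : 0 ≤ q₂) (hP : p₁ + p₂ < 1) (hQ : q₁ + q₂ < 1) :
    Real.sqrt (((p₁+p₂)^2 + (q₁+q₂)^2 - 2*(p₁+p₂)^2*(q₁+q₂)^2) /
        (1 - (p₁+p₂)^2*(q₁+q₂)^2))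
      ≤ Real.sqrt ((p₁^2 + q₁^2 - 2*p₁^2*q₁^2) / (1 - p₁^2*q₁^2))
        + Real.sqrt ((p₂^2 + q₂^2 - 2*p₂^2*q₂^2) / (1 - p₂^2*q₂^2)) := by
  have hP0 : 0 ≤ p₁ + p₂ := by linarith
  have hQ0 : 0 ≤ q₁ + q₂ := by linarith
  have hDP : 0 < 1 - (p₁+p₂)^2*(q₁+q₂)^2 := one_sub_pos' hP0 hP hQ0 hQ
  have hP2 : (0:ℝ) ≤ 1 - (p₁+p₂)^2 := one_sub_sq_nonneg hP0 hP.le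
  have hQ2 : (0:ℝ) ≤ 1 - (q₁+q₂)^2 := one_sub_sq_nonneg hQ0 hQ.le
  have hα : 0 ≤ (1-(q₁+q₂)^2)/(1-(p₁+p₂)^2*(q₁+q₂)^2) := div_nonneg hQ2 hDP.le
  have hβ : 0 ≤ (1-(p₁+p₂)^2)/(1-(p₁+p₂)^2*(q₁+q₂)^2) := div_nonneg hP2 hDP.le
  have hLHSeq : ((p₁+p₂)^2 + (q₁+q₂)^2 - 2*(p₁+p₂)^2*(q₁+q₂)^2) /
        (1 - (p₁+p₂)^2*(q₁+q₂)^2)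
      = (1-(q₁+q₂)^2)/(1-(p₁+p₂)^2*(q₁+q₂)^2)*(p₁+p₂)^2
        + (1-(p₁+p₂)^2)/(1-(p₁+p₂)^2*(q₁+q₂)^2)*(q₁+q₂)^2 := by
    field_simp
    ring
  calc Real.sqrt (((p₁+p₂)^2 + (q₁+q₂)^2 - 2*(p₁+p₂)^2*(q₁+q₂)^2) /
        (1 - (p₁+p₂)^2*(q₁+q₂)^2))
      = Real.sqrt ((1-(q₁+q₂)^2)/(1-(p₁+p₂)^2*(q₁+q₂)^2)*(p₁+p₂)^2
        + (1-(p₁+p₂)^2)/(1-(p₁+p₂)^2*(q₁+q₂)^2)*(q₁+q₂)^2) := by rw [hLHSeq]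
    _ ≤ Real.sqrt ((1-(q₁+q₂)^2)/(1-(p₁+p₂)^2*(q₁+q₂)^2)*p₁^2
          + (1-(p₁+p₂)^2)/(1-(p₁+p₂)^2*(q₁+q₂)^2)*q₁^2)
        + Real.sqrt ((1-(q₁+q₂)^2)/(1-(p₁+p₂)^2*(q₁+q₂)^2)*p₂^2
          + (1-(p₁+p₂)^2)/(1-(p₁+p₂)^2*(q₁+q₂)^2)*q₂^2) :=
        minkow _ _ p₁ q₁ p₂ q₂ hα hβ
    _ ≤ Real.sqrt ((p₁^2 + q₁^2 - 2*p₁^2*q₁^2) / (1 - p₁^2*q₁^2))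
        + Real.sqrt ((p₂^2 + q₂^2 - 2*p₂^2*q₂^2) / (1 - p₂^2*q₂^2)) := by
        apply add_le_add
        · exact Real.sqrt_le_sqrt (tangent (p₁+p₂) (q₁+q₂) p₁ q₁ hp₁
            (by linarith) hq₁ (by linarith) hP hQ)
        · exact Real.sqrt_le_sqrt (tangent (p₁+p₂) (q₁+q₂) p₂ q₂ hp₂
            (by linarith) hq₂ (by linarith) hP hQ)

/-- Each RHS term dominates the corresponding 1-variable piece. -/
lemma term_ge (x y : ℝ) (hx : 0 ≤ x) :
    x / Real.sqrt (1 + x^2) ≤ Real.sqrt ((x^2 + y^2) / (1 + x^2 + y^2)) := by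
  have h1 : (0:ℝ) < 1 + x^2 := by positivity
  have hfx : x / Real.sqrt (1 + x^2) = Real.sqrt (x^2 / (1 + x^2)) := by
    rw [Real.sqrt_div (sq_nonneg x), Real.sqrt_sq hx]
  rw [hfx]
  apply Real.sqrt_le_sqrt
  rw [div_le_div_iff₀ h1 (by positivity)]
  nlinarith [sq_nonneg y, mul_nonneg (sq_nonneg x) (sq_nonneg y)]

/-- Monotonicity of `x ↦ x/√(1+x²)`. -/
lemma fval_mono {u v : ℝ} (hu : 0 ≤ u) (huv : u ≤ v) :
    u / Real.sqrt (1 + u^2) ≤ v / Real.sqrt (1 + v^2) := by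
  have h1 : u / Real.sqrt (1 + u^2) = Real.sqrt (u^2 / (1 + u^2)) := by
    rw [Real.sqrt_div (sq_nonneg u), Real.sqrt_sq hu]
  have h2 : v / Real.sqrt (1 + v^2) = Real.sqrt (v^2 / (1 + v^2)) := by
    rw [Real.sqrt_div (sq_nonneg v), Real.sqrt_sq (hu.trans huv)]
  rw [h1, h2]
  apply Real.sqrt_le_sqrt
  rw [div_le_div_iff₀ (by positivity) (by positivity)]
  have := pow_le_pow_left₀ hu huv 2
  nlinarith [this]

/-- Subadditivity of `x ↦ x/√(1+x²)`. -/
lemma fval_subadd {b c : ℝ} (hb : 0 ≤ b) (hc : 0 ≤ c) :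
    (b + c) / Real.sqrt (1 + (b+c)^2)
      ≤ b / Real.sqrt (1 + b^2) + c / Real.sqrt (1 + c^2) := by
  have hble : Real.sqrt (1 + b^2) ≤ Real.sqrt (1 + (b+c)^2) :=
    Real.sqrt_le_sqrt (by nlinarith)
  have hcle : Real.sqrt (1 + c^2) ≤ Real.sqrt (1 + (b+c)^2) :=
    Real.sqrt_le_sqrt (by nlinarith)
  have hpos : ∀ x : ℝ, (0:ℝ) < Real.sqrt (1 + x^2) :=
    fun x => Real.sqrt_pos.2 (by positivity)
  rw [add_div]
  exact add_le_add
    (div_le_div_of_nonneg_left hb (hpos b) hble)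
    (div_le_div_of_nonneg_left hc (hpos c) hcle)

/-- `x/√(1+x²) < 1`. -/
lemma fval_lt_one (x : ℝ) (hx : 0 ≤ x) : x / Real.sqrt (1 + x^2) < 1 := by
  rw [div_lt_one (Real.sqrt_pos.2 (by positivity))]
  exact Real.lt_sqrt_of_sq_lt (by linarith)

theorem abc_ineq (A B C a b c : ℝ) (hA : 0 < A) (hB : 0 < B) (hC : 0 < C)
    (ha : 0 ≤ a) (hb : 0 ≤ b) (hc : 0 ≤ c)
    (hABC : A / Real.sqrt (1 + A^2) ≤ B / Real.sqrt (1 + B^2) + C / Real.sqrt (1 + C^2))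
    (habc : a ≤ b + c) :
    Real.sqrt ((A^2 + a^2) / (1 + A^2 + a^2)) ≤
      Real.sqrt ((B^2 + b^2) / (1 + B^2 + b^2)) +
      Real.sqrt ((C^2 + c^2) / (1 + C^2 + c^2)) := by
  set pA := A / Real.sqrt (1 + A^2) with hpAdef
  set pB := B / Real.sqrt (1 + B^2) with hpBdef
  set pC := C / Real.sqrt (1 + C^2) with hpCdef
  set qa := a / Real.sqrt (1 + a^2) with hqadef
  set qb := b / Real.sqrt (1 + b^2) with hqbdef
  set qc := c / Real.sqrt (1 + c^2) with hqcdef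
  clear_value pA pB pC qa qb qc
  have hpA0 : 0 ≤ pA := by rw [hpAdef]; positivity
  have hpB0 : 0 ≤ pB := by rw [hpBdef]; positivity
  have hpC0 : 0 ≤ pC := by rw [hpCdef]; positivity
  have hqa0 : 0 ≤ qa := by rw [hqadef]; positivity
  have hqb0 : 0 ≤ qb := by rw [hqbdef]; positivity
  have hqc0 : 0 ≤ qc := by rw [hqcdef]; positivity
  have hpA1 : pA < 1 := by rw [hpAdef]; exact fval_lt_one A hA.le
  have hqa1 : qa < 1 := by rw [hqadef]; exact fval_lt_one a ha
  -- LHS < 1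
  have hLHSlt1 : Real.sqrt ((A^2 + a^2) / (1 + A^2 + a^2)) < 1 := by
    have h : (A^2 + a^2) / (1 + A^2 + a^2) < 1 := by
      rw [div_lt_one (by positivity)]; linarith
    calc Real.sqrt ((A^2 + a^2) / (1 + A^2 + a^2)) < Real.sqrt 1 :=
        Real.sqrt_lt_sqrt (by positivity) h
      _ = 1 := Real.sqrt_one
  -- RHS term lower bounds
  have htB : pB ≤ Real.sqrt ((B^2 + b^2) / (1 + B^2 + b^2)) := by
    rw [hpBdef]; exact term_ge B b hB.le
  have htC : pC ≤ Real.sqrt ((C^2 + c^2) / (1 + C^2 + c^2)) := by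
    rw [hpCdef]; exact term_ge C c hC.le
  have htb : qb ≤ Real.sqrt ((B^2 + b^2) / (1 + B^2 + b^2)) := by
    calc qb ≤ Real.sqrt ((b^2 + B^2) / (1 + b^2 + B^2)) := by
          rw [hqbdef]; exact term_ge b B hb
      _ = Real.sqrt ((B^2 + b^2) / (1 + B^2 + b^2)) := by
          rw [show b^2 + B^2 = B^2 + b^2 from by ring,
            show 1 + b^2 + B^2 = 1 + B^2 + b^2 from by ring]
  have htc : qc ≤ Real.sqrt ((C^2 + c^2) / (1 + C^2 + c^2)) := by
    calc qc ≤ Real.sqrt ((c^2 + C^2) / (1 + c^2 + C^2)) := by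
          rw [hqcdef]; exact term_ge c C hc
      _ = Real.sqrt ((C^2 + c^2) / (1 + C^2 + c^2)) := by
          rw [show c^2 + C^2 = C^2 + c^2 from by ring,
            show 1 + c^2 + C^2 = 1 + C^2 + c^2 from by ring]
  by_cases hP : pB + pC < 1
  · by_cases hQ : qb + qc < 1
    · -- main case
      have hqsum : qa ≤ qb + qc := by
        rw [hqadef, hqbdef, hqcdef]
        exact le_trans (fval_mono ha habc) (fval_subadd hb hc)
      have hgoal1 : Real.sqrt ((A^2 + a^2) / (1 + A^2 + a^2))
          ≤ Real.sqrt (((pB+pC)^2 + (qb+qc)^2 - 2*(pB+pC)^2*(qb+qc)^2) /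
              (1 - (pB+pC)^2*(qb+qc)^2)) := by
        rw [← arg_id A a, ← hpAdef, ← hqadef]
        apply Real.sqrt_le_sqrt
        calc (pA^2 + qa^2 - 2*pA^2*qa^2) / (1 - pA^2*qa^2)
            ≤ ((pB+pC)^2 + qa^2 - 2*(pB+pC)^2*qa^2) / (1 - (pB+pC)^2*qa^2) :=
              frac_mono pA (pB+pC) qa hpA0 hABC hP hqa0 hqa1
          _ = (qa^2 + (pB+pC)^2 - 2*qa^2*(pB+pC)^2) / (1 - qa^2*(pB+pC)^2) := by
              ring
          _ ≤ ((qb+qc)^2 + (pB+pC)^2 - 2*(qb+qc)^2*(pB+pC)^2) /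
                (1 - (qb+qc)^2*(pB+pC)^2) :=
              frac_mono qa (qb+qc) (pB+pC) hqa0 hqsum hQ (by positivity) hP
          _ = ((pB+pC)^2 + (qb+qc)^2 - 2*(pB+pC)^2*(qb+qc)^2) /
                (1 - (pB+pC)^2*(qb+qc)^2) := by ring
      have hkey := key_lemma pB qb pC qc hpB0 hqb0 hpC0 hqc0 hP hQ
      rw [hpBdef, hqbdef, hpCdef, hqcdef] at hkey
      rw [arg_id B b, arg_id C c] at hkey
      rw [← hpBdef, ← hqbdef, ← hpCdef, ← hqcdef] at hkey
      linarith
    · push_neg at hQ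
      linarith
  · push_neg at hP
    linarith
end

section
/- For n ≥ 1, the function p(x,y) = |x − y|/√(|x − y|² + 4|x||y|) on ℝⁿ \ {0} satisfies the triangle inequality: p(x,y) ≤ p(x,z) + p(z,y) for all nonzero x, y, z ∈ ℝⁿ. Consequently p is a metric on ℝⁿ \ {0}. -/
/-!
Write `t, u, v` for `|x - y|, |x - z|, |z - y|` and `A, B, G` for `√|x|, √|y|, √|z|`. Then
`p(x, y) = sin α` with `tan α = t / (2AB)`, and similarly `p(x, z) = sin β`, `p(z, y) = sin γ`.
Ptolemy's inequality `t |z| ≤ u |y| + v |x|` together with the triangle inequalities gives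
`4ABG (tG - uB - vA) ≤ tuv`, which says exactly `tan α ≤ tan β + tan γ + tan α tan β tan γ`.
By the addition formula for the tangent this means `α ≤ β + γ`, and for angles in `[0, π/2]`
this gives `sin α ≤ sin β + sin γ`.
-/

open Real

lemma sin_le_sin_add_sin {α β γ : ℝ} (hα : -(π / 2) ≤ α) (hαβγ : α ≤ β + γ)
    (hβ₀ : 0 ≤ β) (hβ : β ≤ π / 2) (hγ₀ : 0 ≤ γ) (hγ : γ ≤ π / 2) :
    sin α ≤ sin β + sin γ := by
  have hsβ : 0 ≤ sin β := sin_nonneg_of_nonneg_of_le_pi hβ₀ (by linarith [pi_pos])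
  have hsγ : 0 ≤ sin γ := sin_nonneg_of_nonneg_of_le_pi hγ₀ (by linarith [pi_pos])
  rcases le_or_gt (β + γ) (π / 2) with hsum | hsum
  · calc sin α ≤ sin (β + γ) := sin_le_sin_of_le_of_le_pi_div_two hα hsum hαβγ
      _ = sin β * cos γ + cos β * sin γ := sin_add β γ
      _ ≤ sin β + sin γ := by nlinarith [cos_le_one γ, cos_le_one β]
  · have hcβ : 0 ≤ cos β := cos_nonneg_of_mem_Icc ⟨by linarith, hβ⟩
    have hcos : cos β ≤ sin γ := by
      rw [← sin_pi_div_two_sub]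
      exact sin_le_sin_of_le_of_le_pi_div_two (by linarith) hγ (by linarith)
    nlinarith [sin_sq_add_cos_sq β, sin_le_one α, mul_nonneg hsβ (sub_nonneg.2 (sin_le_one β)),
      mul_nonneg hcβ (sub_nonneg.2 (cos_le_one β))]

lemma arctan_le_arctan_add_arctan {s w z : ℝ} (hw : 0 ≤ w)
    (h : s ≤ w + z + s * w * z) : arctan s ≤ arctan w + arctan z := by
  rcases lt_or_ge (w * z) 1 with hwz | hwz
  · rw [arctan_add hwz]
    refine arctan_mono ?_
    rw [le_div_iff₀ (by linarith)]
    linarith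
  · have hw₀ : 0 < w := hw.lt_of_ne (by rintro rfl; linarith [zero_mul z])
    have hzw : arctan w⁻¹ ≤ arctan z := arctan_mono ((inv_le_iff_one_le_mul₀' hw₀).2 hwz)
    rw [arctan_inv_of_pos hw₀] at hzw
    linarith [arctan_lt_pi_div_two s]

lemma sin_arctan_div {t m : ℝ} (hm : 0 < m) : sin (arctan (t / m)) = t / √(t ^ 2 + m ^ 2) := by
  rw [sin_arctan, show 1 + (t / m) ^ 2 = (t ^ 2 + m ^ 2) / m ^ 2 by field_simp; ring,
    sqrt_div' _ (by positivity), sqrt_sq hm.le, div_div_eq_mul_div, div_mul_cancel₀ _ hm.ne']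

lemma add_mul_add_mul_add_mul_sub_le {t u v A B G : ℝ} (hB : 0 ≤ B) (hu : 0 ≤ u) (hv : 0 ≤ v)
    (hptolemy : t * G ^ 2 ≤ u * B ^ 2 + v * A ^ 2) (htri : t ≤ u + v)
    (hA : A ^ 2 ≤ G ^ 2 + u) (hAB : A ^ 2 - B ^ 2 ≤ t) (hBG : B ≤ G) (hGA : G ≤ A) :
    (A + B) * (A + G) * (G + B) * (t * G - u * B - v * A) ≤ t * u * v := by
  have hG : 0 ≤ G := hB.trans hBG
  have h₁ : (G + B) * (t * G - u * B - v * A) ≤ v * (A - B) * (A - G) := by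
    nlinarith [mul_le_mul_of_nonneg_right htri (mul_nonneg hG hB)]
  have hvAB : 0 ≤ v * (A - B) := mul_nonneg hv (by linarith)
  calc (A + B) * (A + G) * (G + B) * (t * G - u * B - v * A)
      = (A + B) * ((A + G) * ((G + B) * (t * G - u * B - v * A))) := by ring
    _ ≤ (A + B) * ((A + G) * (v * (A - B) * (A - G))) := by gcongr <;> linarith
    _ = (A + B) * (v * (A - B) * (A ^ 2 - G ^ 2)) := by ring
    _ ≤ (A + B) * (v * (A - B) * u) := by gcongr <;> linarith
    _ = u * v * (A ^ 2 - B ^ 2) := by ring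
    _ ≤ u * v * t := by gcongr
    _ = t * u * v := by ring

lemma four_mul_mul_mul_sub_le {t u v A B G : ℝ} (hA : 0 < A) (hB : 0 < B) (hG : 0 < G)
    (ht : 0 ≤ t) (hu : 0 ≤ u) (hv : 0 ≤ v)
    (hptolemy : t * G ^ 2 ≤ u * B ^ 2 + v * A ^ 2) (htri : t ≤ u + v)
    (hAG : A ^ 2 ≤ G ^ 2 + u) (hBG : B ^ 2 ≤ G ^ 2 + v) (hAB : |A ^ 2 - B ^ 2| ≤ t) :
    4 * A * B * G * (t * G - u * B - v * A) ≤ t * u * v := by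
  set D := t * G - u * B - v * A with hD
  rcases le_or_gt D 0 with hD₀ | hD₀
  · exact (mul_nonpos_of_nonneg_of_nonpos (by positivity) hD₀).trans (by positivity)
  have hbound : (A + B) * (A + G) * (G + B) * D ≤ t * u * v := by
    rcases le_total A G with hAG' | hGA' <;> rcases le_total B G with hBG' | hGB'
    · nlinarith [mul_nonneg (mul_nonneg hu hB.le) (sub_nonneg.2 hBG'),
        mul_nonneg (mul_nonneg hv hA.le) (sub_nonneg.2 hAG'), mul_pos hG hD₀]
    · have := add_mul_add_mul_add_mul_sub_le (t := t) hA.le hv hu (by linarith) (by linarith) hBG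
        (abs_sub_le_iff.1 hAB).2 hAG' hGB'
      linarith
    · exact add_mul_add_mul_add_mul_sub_le hB.le hu hv hptolemy htri hAG
        (abs_sub_le_iff.1 hAB).1 hBG' hGA'
    · nlinarith [mul_le_mul_of_nonneg_right htri hG.le, mul_nonneg hu (sub_nonneg.2 hGB'),
        mul_nonneg hv (sub_nonneg.2 hGA')]
  have hamgm : 4 * A * B * G ≤ (A + B) * (A + G) * (G + B) := by
    nlinarith [mul_nonneg (sq_nonneg (A - B)) hG.le, mul_nonneg (sq_nonneg (G - B)) hA.le,
      mul_nonneg (sq_nonneg (A - G)) hB.le, mul_pos (mul_pos hA hB) hG]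
  nlinarith [mul_le_mul_of_nonneg_right hamgm hD₀.le]

section

variable {E : Type*} [NormedAddCommGroup E]

noncomputable def puncturedPointPair (x y : E) : ℝ :=
  ‖x - y‖ / √(‖x - y‖ ^ 2 + 4 * ‖x‖ * ‖y‖)

lemma puncturedPointPair_comm (x y : E) : puncturedPointPair x y = puncturedPointPair y x := by
  rw [puncturedPointPair, puncturedPointPair, norm_sub_rev, mul_right_comm]

lemma puncturedPointPair_eq_zero_iff {x y : E} (hx : x ≠ 0) (hy : y ≠ 0) :
    puncturedPointPair x y = 0 ↔ x = y := by
  have hden : 0 < √(‖x - y‖ ^ 2 + 4 * ‖x‖ * ‖y‖) := by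
    have hx₀ := norm_pos_iff.2 hx
    have hy₀ := norm_pos_iff.2 hy
    positivity
  rw [puncturedPointPair, div_eq_zero_iff, or_iff_left hden.ne', norm_eq_zero, sub_eq_zero]

lemma puncturedPointPair_eq_sin_arctan {x y : E} (hx : x ≠ 0) (hy : y ≠ 0) :
    puncturedPointPair x y = sin (arctan (‖x - y‖ / (2 * √‖x‖ * √‖y‖))) := by
  have hx₀ := norm_pos_iff.2 hx
  have hy₀ := norm_pos_iff.2 hy
  rw [sin_arctan_div (by positivity), mul_pow, mul_pow, sq_sqrt (norm_nonneg _),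
    sq_sqrt (norm_nonneg _), puncturedPointPair]
  ring_nf

variable [InnerProductSpace ℝ E]

lemma puncturedPointPair_triangle {x y z : E} (hx : x ≠ 0) (hy : y ≠ 0) (hz : z ≠ 0) :
    puncturedPointPair x y ≤ puncturedPointPair x z + puncturedPointPair z y := by
  rw [puncturedPointPair_eq_sin_arctan hx hy, puncturedPointPair_eq_sin_arctan hx hz,
    puncturedPointPair_eq_sin_arctan hz hy]
  set A := √‖x‖
  set B := √‖y‖
  set G := √‖z‖
  have hA : 0 < A := sqrt_pos.2 (norm_pos_iff.2 hx)
  have hB : 0 < B := sqrt_pos.2 (norm_pos_iff.2 hy)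
  have hG : 0 < G := sqrt_pos.2 (norm_pos_iff.2 hz)
  have hA2 : A ^ 2 = ‖x‖ := sq_sqrt (norm_nonneg _)
  have hB2 : B ^ 2 = ‖y‖ := sq_sqrt (norm_nonneg _)
  have hG2 : G ^ 2 = ‖z‖ := sq_sqrt (norm_nonneg _)
  have hptolemy : ‖x - y‖ * G ^ 2 ≤ ‖x - z‖ * B ^ 2 + ‖z - y‖ * A ^ 2 := by
    simpa [hA2, hB2, hG2, dist_eq_norm] using
      EuclideanGeometry.mul_dist_le_mul_dist_add_mul_dist x z y 0
  have key := four_mul_mul_mul_sub_le hA hB hG (norm_nonneg (x - y)) (norm_nonneg (x - z))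
    (norm_nonneg (z - y)) hptolemy (norm_sub_le_norm_sub_add_norm_sub x z y)
    (by simpa [hA2, hG2] using norm_le_norm_add_norm_sub' x z)
    (by simpa [hB2, hG2] using norm_le_norm_add_norm_sub z y)
    (by simpa [hA2, hB2] using abs_norm_sub_norm_le x y)
  have htan : ‖x - y‖ / (2 * A * B) ≤ ‖x - z‖ / (2 * A * G) + ‖z - y‖ / (2 * G * B) +
      ‖x - y‖ / (2 * A * B) * (‖x - z‖ / (2 * A * G)) * (‖z - y‖ / (2 * G * B)) := by
    rw [← sub_nonneg]
    refine (div_nonneg (sub_nonneg.2 key) (by positivity : (0 : ℝ) ≤ 8 * (A * B * G) ^ 2)).trans_eq ?_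
    field_simp
    ring
  refine sin_le_sin_add_sin (neg_pi_div_two_lt_arctan _).le
    (arctan_le_arctan_add_arctan (by positivity) htan) ?_
    (arctan_lt_pi_div_two _).le ?_ (arctan_lt_pi_div_two _).le <;>
  exact arctan_nonneg.2 (by positivity)

end

theorem ppf_metric_punctured_general (n : ℕ)
    (p : EuclideanSpace ℝ (Fin n) → EuclideanSpace ℝ (Fin n) → ℝ)
    (hp : ∀ x y, p x y = ‖x - y‖ / Real.sqrt (‖x - y‖^2 + 4 * ‖x‖ * ‖y‖)) :
    (∀ x y z : EuclideanSpace ℝ (Fin n), x ≠ 0 → y ≠ 0 → z ≠ 0 →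
      p x y ≤ p x z + p z y) ∧
    (∀ x y : EuclideanSpace ℝ (Fin n), x ≠ 0 → y ≠ 0 → p x y = p y x) ∧
    (∀ x y : EuclideanSpace ℝ (Fin n), x ≠ 0 → y ≠ 0 → (p x y = 0 ↔ x = y)) := by
  obtain rfl : p = puncturedPointPair := funext₂ hp
  exact ⟨fun _ _ _ hx hy hz ↦ puncturedPointPair_triangle hx hy hz,
    fun x y _ _ ↦ puncturedPointPair_comm x y, fun _ _ hx hy ↦ puncturedPointPair_eq_zero_iff hx hy⟩

theorem ppf_metric_punctured (n : ℕ) (hn : 1 ≤ n)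
    (p : EuclideanSpace ℝ (Fin n) → EuclideanSpace ℝ (Fin n) → ℝ)
    (hp : ∀ x y, p x y = ‖x - y‖ / Real.sqrt (‖x - y‖^2 + 4 * ‖x‖ * ‖y‖)) :
    (∀ x y z : EuclideanSpace ℝ (Fin n), x ≠ 0 → y ≠ 0 → z ≠ 0 →
      p x y ≤ p x z + p z y) ∧
    (∀ x y : EuclideanSpace ℝ (Fin n), x ≠ 0 → y ≠ 0 → p x y = p y x) ∧
    (∀ x y : EuclideanSpace ℝ (Fin n), x ≠ 0 → y ≠ 0 → (p x y = 0 ↔ x = y)) :=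
  ppf_metric_punctured_general n p hp
end

section
/- Let G be any proper nonempty open connected subset of ℝⁿ, n ≥ 1, and let p_G(x,y) = |x−y|/√(|x−y|² + 4 d_G(x) d_G(y)), where d_G(x) = dist(x, ∂G). Then for all x, y, z ∈ G, p_G(x,y) ≤ (√5/2)(p_G(x,z) + p_G(z,y)). -/
set_option maxHeartbeats 1000000

private theorem core_poly_ppf (u v : ℝ) (hu : 0 ≤ u) (hv : 0 ≤ v) (hu1 : u ≤ 1) (hv1 : v ≤ 1) :
    (u+v+2*u*v)^2 * (4 - 5*(u+v)^2) ≤ 5*(u+v)^2*((1-u^2)*(1-v^2)) := by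
  have hR : 0 ≤ 2*u+2*v - u^2 - v^2 + 6*u*v + 10*u*v*(u+v) := by
    nlinarith [mul_nonneg hu hv, mul_nonneg (mul_nonneg hu hv) (add_nonneg hu hv)]
  nlinarith [sq_nonneg (5*u*v*(u+v) + 4*u*v + (u+v)^2 - (u+v)),
    mul_nonneg (sq_nonneg (u-v)) hR]

private theorem gbound_ppf (s g P u a : ℝ) (hs : 0 < s) (hg : 0 < g) (hP : 0 < P)
    (hu : 0 ≤ u) (hP2 : P^2 = 1 - u^2)
    (hap : a * P = 2 * s * g * u) (hga : g^2 ≤ s^2 + a) :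
    g^2 * (1 - u) ≤ s^2 * (1 + u) := by
  have key : P * g ≤ s * (1 + u) := by
    nlinarith [mul_le_mul_of_nonneg_left hga hP.le, hap, mul_pos hs hg,
      sq_nonneg (P*g - s*(1+u)), sq_nonneg (P*g + s*(1-u)), mul_pos hP hg, mul_pos hP hs]
  have h2 : g^2 * (1 - u^2) ≤ s^2 * (1+u)^2 := by
    nlinarith [mul_le_mul key key (by positivity) (by positivity), hP2]
  nlinarith [sq_nonneg g, hu]

private theorem lt_one_ppf (u aa D : ℝ) (hD : 0 < D) (haa : 0 ≤ aa)
    (hE : u^2 * (aa + D) = aa) : u^2 < 1 := by nlinarith [sq_nonneg u]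

private theorem sqb_ppf (g t v X : ℝ) (hv : 0 ≤ v) (hX : X = 1 - v^2)
    (hGv : g^2*(1-v) ≤ t^2*(1+v)) : g^2*X ≤ t^2*(1+v)^2 := by
  nlinarith [mul_le_mul_of_nonneg_right hGv (by linarith : (0:ℝ) ≤ 1+v)]

private theorem sumsq_ppf (s t g u v P Q : ℝ) (hs : 0 ≤ s) (ht : 0 ≤ t) (hg : 0 ≤ g)
    (hu : 0 ≤ u) (hv : 0 ≤ v) (hP : 0 ≤ P) (hQ : 0 ≤ Q)
    (hgQ : g^2*Q^2 ≤ t^2*(1+v)^2) (hgP : g^2*P^2 ≤ s^2*(1+u)^2)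
    (hmix : g^2*(P*Q) ≤ s*t*(1+u)*(1+v)) :
    (2*g*(s*u*Q + t*v*P))^2 ≤ 4*s^2*t^2*(u+v+2*u*v)^2 := by
  nlinarith [mul_le_mul_of_nonneg_left hgQ (by positivity : (0:ℝ) ≤ s^2*u^2),
    mul_le_mul_of_nonneg_left hgP (by positivity : (0:ℝ) ≤ t^2*v^2),
    mul_le_mul_of_nonneg_left hmix (by positivity : (0:ℝ) ≤ 2*(s*t*u*v))]

private theorem final_ppf (a b c dx dy u v w : ℝ) (hc0 : 0 ≤ c) (ha0 : 0 ≤ a) (hb0 : 0 ≤ b)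
    (htri : c ≤ a+b) (hdx : 0 < dx) (hdy : 0 < dy)
    (hwE : w^2*(c^2+4*dx*dy) = c^2) (hu0 : 0 ≤ u) (hv0 : 0 ≤ v)
    (hmain : 0 ≤ 4 - 5*(u+v)^2 → (a+b)^2*(4-5*(u+v)^2) ≤ 20*(u+v)^2*(dx*dy)) :
    w^2 ≤ 5/4*(u+v)^2 := by
  have hden : (0:ℝ) < c^2 + 4*dx*dy := by positivity
  have hfin : 4 * c^2 ≤ 5 * (u+v)^2 * (c^2 + 4*dx*dy) := by
    rcases le_or_gt (4 - 5*(u+v)^2) 0 with hK | hK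
    · nlinarith [sq_nonneg c, mul_pos hdx hdy, sq_nonneg (u+v)]
    · have h1 := hmain hK.le
      have h2 : c^2 ≤ (a+b)^2 := by nlinarith
      have h3 : c^2 * (4 - 5*(u+v)^2) ≤ (a+b)^2 * (4 - 5*(u+v)^2) :=
        mul_le_mul_of_nonneg_right h2 hK.le
      nlinarith [h1, h3]
  nlinarith [hwE, hfin, hden]

private theorem le_one_ppf (u : ℝ) (h0 : 0 ≤ u) (h1 : u^2 < 1) : u ≤ 1 := by nlinarith

private theorem ppf_basic (r d : ℝ) (hr : 0 ≤ r) (hd : 0 < d) :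
    0 ≤ r / Real.sqrt (r^2 + d) ∧ (r / Real.sqrt (r^2 + d))^2 * (r^2 + d) = r^2 := by
  have hpos : 0 < r^2 + d := by positivity
  have hs : 0 < Real.sqrt (r^2 + d) := Real.sqrt_pos.mpr hpos
  have hs2 : (Real.sqrt (r^2 + d))^2 = r^2 + d := Real.sq_sqrt hpos.le
  refine ⟨div_nonneg hr hs.le, ?_⟩
  rw [div_pow, hs2, div_mul_cancel₀]
  exact hpos.ne'

private theorem ppf_key (dx dy dh a b c u v w : ℝ)
    (hdx : 0 < dx) (hdy : 0 < dy) (hdh : 0 < dh)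
    (ha0 : 0 ≤ a) (hb0 : 0 ≤ b) (hc0 : 0 ≤ c)
    (htri : c ≤ a + b) (hLa : dh ≤ dx + a) (hLb : dh ≤ dy + b)
    (hu0 : 0 ≤ u) (hv0 : 0 ≤ v) (hw0 : 0 ≤ w)
    (huE : u^2 * (a^2 + 4*dx*dh) = a^2)
    (hvE : v^2 * (b^2 + 4*dh*dy) = b^2)
    (hwE : w^2 * (c^2 + 4*dx*dy) = c^2) :
    w^2 ≤ 5/4*(u+v)^2 := by
  have hu1 : u^2 < 1 := lt_one_ppf u (a^2) (4*dx*dh) (by positivity) (by positivity)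
    (by linarith [huE])
  have hv1 : v^2 < 1 := lt_one_ppf v (b^2) (4*dh*dy) (by positivity) (by positivity)
    (by linarith [hvE])
  have hu1' : u ≤ 1 := le_one_ppf u hu0 hu1
  have hv1' : v ≤ 1 := le_one_ppf v hv0 hv1
  set s := Real.sqrt dx with hsdef
  set t := Real.sqrt dy with htdef
  set g := Real.sqrt dh with hgdef
  have hs : 0 < s := Real.sqrt_pos.mpr hdx
  have ht : 0 < t := Real.sqrt_pos.mpr hdy
  have hg : 0 < g := Real.sqrt_pos.mpr hdh
  have hs2 : s^2 = dx := Real.sq_sqrt hdx.le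
  have ht2 : t^2 = dy := Real.sq_sqrt hdy.le
  have hg2 : g^2 = dh := Real.sq_sqrt hdh.le
  set P := Real.sqrt (1 - u^2) with hPdef
  set Q := Real.sqrt (1 - v^2) with hQdef
  have hP : 0 < P := Real.sqrt_pos.mpr (by linarith)
  have hQ : 0 < Q := Real.sqrt_pos.mpr (by linarith)
  have hP2 : P^2 = 1 - u^2 := Real.sq_sqrt (by linarith)
  have hQ2 : Q^2 = 1 - v^2 := Real.sq_sqrt (by linarith)
  have hap : a * P = 2 * s * g * u := by
    have hsq : (a * P)^2 = (2 * s * g * u)^2 := by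
      rw [mul_pow, mul_pow, hP2, show (2*s*g)^2 = 4*s^2*g^2 by ring, hs2, hg2]
      linear_combination -huE
    calc a * P = Real.sqrt ((a*P)^2) := (Real.sqrt_sq (by positivity)).symm
    _ = Real.sqrt ((2*s*g*u)^2) := by rw [hsq]
    _ = 2 * s * g * u := Real.sqrt_sq (by positivity)
  have hbq : b * Q = 2 * t * g * v := by
    have hsq : (b * Q)^2 = (2 * t * g * v)^2 := by
      rw [mul_pow, mul_pow, hQ2, show (2*t*g)^2 = 4*t^2*g^2 by ring, ht2, hg2]
      linear_combination -hvE
    calc b * Q = Real.sqrt ((b*Q)^2) := (Real.sqrt_sq (by positivity)).symm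
    _ = Real.sqrt ((2*t*g*v)^2) := by rw [hsq]
    _ = 2 * t * g * v := Real.sqrt_sq (by positivity)
  have hGu : g^2 * (1 - u) ≤ s^2 * (1 + u) :=
    gbound_ppf s g P u a hs hg hP hu0 hP2 hap (by rw [hs2, hg2]; linarith)
  have hGv : g^2 * (1 - v) ≤ t^2 * (1 + v) :=
    gbound_ppf t g Q v b ht hg hQ hv0 hQ2 hbq (by rw [ht2, hg2]; linarith)
  have hmix : g^2 * (P * Q) ≤ s * t * (1+u) * (1+v) := by
    have hXsq : (g^2 * (P * Q))^2 ≤ (s * t * (1+u) * (1+v))^2 := by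
      have e1 : (g^2 * (P * Q))^2 = (g^2*(1-u)) * (g^2*(1-v)) * ((1+u)*(1+v)) := by
        rw [mul_pow, mul_pow, hP2, hQ2]; ring
      have e2 : (s * t * (1+u) * (1+v))^2 = (s^2*(1+u)) * (t^2*(1+v)) * ((1+u)*(1+v)) := by ring
      rw [e1, e2]
      have h1 : 0 ≤ g^2*(1-u) := mul_nonneg (sq_nonneg g) (by linarith)
      have h2 : 0 ≤ g^2*(1-v) := mul_nonneg (sq_nonneg g) (by linarith)
      have h3 : (g^2*(1-u)) * (g^2*(1-v)) ≤ (s^2*(1+u)) * (t^2*(1+v)) :=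
        mul_le_mul hGu hGv h2 (by positivity)
      exact mul_le_mul_of_nonneg_right h3 (by positivity)
    calc g^2 * (P * Q) = Real.sqrt ((g^2*(P*Q))^2) := (Real.sqrt_sq (by positivity)).symm
    _ ≤ Real.sqrt ((s*t*(1+u)*(1+v))^2) := Real.sqrt_le_sqrt hXsq
    _ = s*t*(1+u)*(1+v) := Real.sqrt_sq (by positivity)
  -- main bound
  have hmain : 0 ≤ 4 - 5*(u+v)^2 → (a+b)^2 * (4 - 5*(u+v)^2) ≤ 20*(u+v)^2*(dx*dy) := by
    intro hK
    have hsum : ((a+b) * (P*Q))^2 ≤ 4 * s^2 * t^2 * (u+v+2*u*v)^2 := by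
      have e : (a+b) * (P*Q) = 2*g*(s*u*Q + t*v*P) := by
        have h' : (a+b)*(P*Q) = (a*P)*Q + (b*Q)*P := by ring
        rw [h', hap, hbq]; ring
      have hgQ : g^2*Q^2 ≤ t^2*(1+v)^2 := by
        rw [hQ2]; exact sqb_ppf g t v (1-v^2) hv0 rfl hGv
      have hgP : g^2*P^2 ≤ s^2*(1+u)^2 := by
        rw [hP2]; exact sqb_ppf g s u (1-u^2) hu0 rfl hGu
      rw [e]
      have h4 : (4:ℝ)*s^2*t^2*(u+v+2*u*v)^2 = 4*s^2*t^2*(u+v+2*u*v)^2 := rfl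
      exact sumsq_ppf s t g u v P Q hs.le ht.le hg.le hu0 hv0 hP.le hQ.le hgQ hgP hmix
    have hcore := core_poly_ppf u v hu0 hv0 hu1' hv1'
    have hPQ : 0 < (P*Q)^2 := by positivity
    have step : ((a+b)*(P*Q))^2 * (4 - 5*(u+v)^2) ≤ 20*(u+v)^2*(s^2*t^2)*((P*Q)^2) := by
      calc ((a+b)*(P*Q))^2 * (4 - 5*(u+v)^2)
          ≤ (4 * s^2 * t^2 * (u+v+2*u*v)^2) * (4 - 5*(u+v)^2) :=
            mul_le_mul_of_nonneg_right hsum hK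
      _ = (4 * s^2 * t^2) * ((u+v+2*u*v)^2 * (4 - 5*(u+v)^2)) := by ring
      _ ≤ (4 * s^2 * t^2) * (5*(u+v)^2*((1-u^2)*(1-v^2))) :=
            mul_le_mul_of_nonneg_left hcore (by positivity)
      _ = 20*(u+v)^2*(s^2*t^2)*((P*Q)^2) := by rw [mul_pow, hP2, hQ2]; ring
    have h' : ((a+b)^2 * (4 - 5*(u+v)^2)) * (P*Q)^2 ≤ (20*(u+v)^2*(dx*dy)) * (P*Q)^2 := by
      calc ((a+b)^2 * (4 - 5*(u+v)^2)) * (P*Q)^2 = ((a+b)*(P*Q))^2 * (4 - 5*(u+v)^2) := by ring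
      _ ≤ 20*(u+v)^2*(s^2*t^2)*((P*Q)^2) := step
      _ = (20*(u+v)^2*(dx*dy)) * (P*Q)^2 := by rw [hs2, ht2]
    exact le_of_mul_le_mul_right h' hPQ
  exact final_ppf a b c dx dy u v w hc0 ha0 hb0 htri hdx hdy hwE hu0 hv0 hmain

theorem ppf_quasi_general (n : ℕ) (hn : 1 ≤ n)
    (G : Set (EuclideanSpace ℝ (Fin n)))
    (hne : G.Nonempty) (hopen : IsOpen G) (hconn : IsConnected G)
    (hproper : G ≠ Set.univ)
    (p : EuclideanSpace ℝ (Fin n) → EuclideanSpace ℝ (Fin n) → ℝ)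
    (hp : ∀ x y, p x y = ‖x - y‖ /
      Real.sqrt (‖x - y‖^2 + 4 * Metric.infDist x (frontier G) * Metric.infDist y (frontier G)))
    (x y z : EuclideanSpace ℝ (Fin n)) (hx : x ∈ G) (hy : y ∈ G) (hz : z ∈ G) :
    p x y ≤ (Real.sqrt 5 / 2) * (p x z + p z y) := by
  have hfr : (frontier G).Nonempty := nonempty_frontier_iff.mpr ⟨hne, hproper⟩
  have hfrc : IsClosed (frontier G) := isClosed_frontier
  have hmem : ∀ w ∈ G, 0 < Metric.infDist w (frontier G) := by
    intro w hw
    rw [← hfrc.notMem_iff_infDist_pos hfr]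
    intro hwf
    exact hwf.2 (by rw [hopen.interior_eq]; exact hw)
  have hdx := hmem x hx
  have hdy := hmem y hy
  have hdh := hmem z hz
  have htri : ‖x - y‖ ≤ ‖x - z‖ + ‖z - y‖ := by
    simpa [dist_eq_norm] using dist_triangle x z y
  have hLa : Metric.infDist z (frontier G) ≤ Metric.infDist x (frontier G) + ‖x - z‖ := by
    have := Metric.infDist_le_infDist_add_dist (x := z) (y := x) (s := frontier G)
    simpa [dist_eq_norm, norm_sub_rev] using this
  have hLb : Metric.infDist z (frontier G) ≤ Metric.infDist y (frontier G) + ‖z - y‖ := by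
    have := Metric.infDist_le_infDist_add_dist (x := z) (y := y) (s := frontier G)
    simpa [dist_eq_norm, norm_sub_rev] using this
  have hu4 : (0:ℝ) < 4 * Metric.infDist x (frontier G) * Metric.infDist z (frontier G) := by
    positivity
  have hv4 : (0:ℝ) < 4 * Metric.infDist z (frontier G) * Metric.infDist y (frontier G) := by
    positivity
  have hw4 : (0:ℝ) < 4 * Metric.infDist x (frontier G) * Metric.infDist y (frontier G) := by
    positivity
  have hu0 : 0 ≤ p x z := by rw [hp]; exact (ppf_basic ‖x - z‖ _ (norm_nonneg _) hu4).1
  have hv0 : 0 ≤ p z y := by rw [hp]; exact (ppf_basic ‖z - y‖ _ (norm_nonneg _) hv4).1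
  have hw0 : 0 ≤ p x y := by rw [hp]; exact (ppf_basic ‖x - y‖ _ (norm_nonneg _) hw4).1
  have key : (p x y)^2 ≤ 5/4 * (p x z + p z y)^2 := by
    refine ppf_key (Metric.infDist x (frontier G)) (Metric.infDist y (frontier G))
      (Metric.infDist z (frontier G)) ‖x - z‖ ‖z - y‖ ‖x - y‖
      (p x z) (p z y) (p x y) hdx hdy hdh (norm_nonneg _) (norm_nonneg _) (norm_nonneg _)
      htri hLa hLb hu0 hv0 hw0 ?_ ?_ ?_
    · rw [hp]; exact (ppf_basic ‖x - z‖ _ (norm_nonneg _) hu4).2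
    · rw [hp]; exact (ppf_basic ‖z - y‖ _ (norm_nonneg _) hv4).2
    · rw [hp]; exact (ppf_basic ‖x - y‖ _ (norm_nonneg _) hw4).2
  have hrhs0 : 0 ≤ Real.sqrt 5 / 2 * (p x z + p z y) := by positivity
  have hs5 : (Real.sqrt 5 / 2 * (p x z + p z y))^2 = 5/4 * (p x z + p z y)^2 := by
    rw [mul_pow, div_pow, Real.sq_sqrt (by norm_num : (0:ℝ) ≤ 5)]
    ring
  calc p x y = Real.sqrt ((p x y)^2) := (Real.sqrt_sq hw0).symm
  _ ≤ Real.sqrt ((Real.sqrt 5 / 2 * (p x z + p z y))^2) := by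
      apply Real.sqrt_le_sqrt; rw [hs5]; exact key
  _ = Real.sqrt 5 / 2 * (p x z + p z y) := Real.sqrt_sq hrhs0
end

section
/- For a constant α with 0 < α ≤ 12, the function p(x,y) = |x − y|/√((x − y)² + αxy) on the positive real axis ℝ⁺ satisfies the triangle inequality p(x,y) ≤ p(x,z) + p(z,y) for all x, y, z > 0, and hence is a metric on ℝ⁺. -/
/-!
Substituting `x = exp (2 u)`, `y = exp (2 v)` turns `p` into `F (|u - v|)` with
`F t = sinh t / √(sinh t ² + α / 4)`. Since `F` is increasing, the triangle inequality for `|u - v|`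
reduces the claim to subadditivity of `F` on `[0, ∞)`, which follows from `F 0 = 0` and concavity.
`F` is concave on `[0, ∞)` because its derivative `(α / 4) cosh t / (sinh t ² + α / 4) ^ (3 / 2)`
decreases there exactly when `α ≤ 12`.
-/

open Real Set

theorem ConcaveOn.map_add_le {𝕜 : Type*} [Field 𝕜] [LinearOrder 𝕜] [IsStrictOrderedRing 𝕜]
    {f : 𝕜 → 𝕜} (hf : ConcaveOn 𝕜 (Ici 0) f) (hf0 : 0 ≤ f 0) {a b : 𝕜} (ha : 0 ≤ a)
    (hb : 0 ≤ b) : f (a + b) ≤ f a + f b := by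
  rcases (add_nonneg ha hb).eq_or_lt with hab | hab
  · obtain ⟨rfl, rfl⟩ : a = 0 ∧ b = 0 := ⟨by linarith, by linarith⟩
    simpa using hf0
  -- concavity between the points `a + b` and `0`
  have key : ∀ x, 0 ≤ x → x ≤ a + b → x / (a + b) * f (a + b) ≤ f x := by
    intro x hx0 hxab
    have hw : 0 ≤ 1 - x / (a + b) := sub_nonneg.2 ((div_le_one hab).2 hxab)
    have h := hf.2 (mem_Ici.2 hab.le) (mem_Ici.2 le_rfl) (div_nonneg hx0 hab.le) hw
      (add_sub_cancel _ _)
    simp only [smul_eq_mul, mul_zero, add_zero, div_mul_cancel₀ _ hab.ne'] at h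
    nlinarith [mul_nonneg hw hf0]
  have hsum : a / (a + b) * f (a + b) + b / (a + b) * f (a + b) = f (a + b) := by
    field_simp
  linarith [key a ha (by linarith), key b hb (by linarith)]

noncomputable def sinhRatio (c t : ℝ) : ℝ := sinh t / √(sinh t ^ 2 + c)

variable {c : ℝ}

theorem hasDerivAt_sinhRatio (hc : 0 < c) (t : ℝ) :
    HasDerivAt (sinhRatio c) (c * cosh t / √(sinh t ^ 2 + c) ^ 3) t := by
  have hX : 0 < sinh t ^ 2 + c := by positivity
  have hq : HasDerivAt (fun u => √(sinh u ^ 2 + c))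
      (2 * sinh t * cosh t / (2 * √(sinh t ^ 2 + c))) t := by
    simpa [mul_comm] using (((hasDerivAt_sinh t).pow 2).add_const c).sqrt hX.ne'
  refine ((hasDerivAt_sinh t).div hq (sqrt_pos.2 hX).ne').congr_deriv ?_
  field_simp
  linear_combination sq_sqrt hX.le

theorem deriv_sinhRatio_pos (hc : 0 < c) (t : ℝ) : 0 < deriv (sinhRatio c) t := by
  rw [(hasDerivAt_sinhRatio hc t).deriv]
  exact div_pos (mul_pos hc (cosh_pos t)) (pow_pos (sqrt_pos.2 (by positivity)) 3)

theorem deriv_sinhRatio_sq (hc : 0 < c) (t : ℝ) :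
    deriv (sinhRatio c) t ^ 2 = c ^ 2 * ((1 + sinh t ^ 2) / (sinh t ^ 2 + c) ^ 3) := by
  rw [(hasDerivAt_sinhRatio hc t).deriv, div_pow, mul_pow, ← pow_mul, mul_comm 3 2, pow_mul,
    sq_sqrt (by positivity), cosh_sq']
  ring

theorem sinhRatio_strictMono (hc : 0 < c) : StrictMono (sinhRatio c) :=
  strictMono_of_deriv_pos (deriv_sinhRatio_pos hc)

/-- The derivative of `s ↦ (1 + s) / (s + c) ^ 3` has numerator `-(s + c) ^ 2 * (2 * s + 3 - c)`,
which is where `c ≤ 3` (that is, `α ≤ 12`) comes from. -/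
theorem one_add_div_add_pow_three_le_of_le (hc : 0 < c) (hc3 : c ≤ 3) {s t : ℝ} (hs : 0 ≤ s)
    (hst : s ≤ t) : (1 + t) / (t + c) ^ 3 ≤ (1 + s) / (s + c) ^ 3 := by
  have ht : 0 ≤ t := hs.trans hst
  have hQ : 0 ≤ s ^ 2 + s * t + t ^ 2 + 3 * c * (s + t) + s * t * (s + t) + 3 * c * s * t
      + c ^ 2 * (3 - c) := by
    have := mul_nonneg (sq_nonneg c) (sub_nonneg.2 hc3)
    have := mul_nonneg hs ht
    have := mul_nonneg hc.le (add_nonneg hs ht)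
    have := mul_nonneg (mul_nonneg hs ht) (add_nonneg hs ht)
    have := mul_nonneg (mul_nonneg hc.le hs) ht
    nlinarith
  rw [div_le_div_iff₀ (by positivity) (by positivity)]
  nlinarith [mul_nonneg (sub_nonneg.2 hst) hQ]

theorem sinhRatio_concaveOn (hc : 0 < c) (hc3 : c ≤ 3) :
    ConcaveOn ℝ (Ici 0) (sinhRatio c) := by
  have hd := hasDerivAt_sinhRatio hc
  refine AntitoneOn.concaveOn_of_deriv (convex_Ici 0)
    (fun t _ => (hd t).continuousAt.continuousWithinAt)
    (fun t _ => (hd t).differentiableAt.differentiableWithinAt) ?_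
  rw [interior_Ici]
  intro a ha b _ hab
  rw [← pow_le_pow_iff_left₀ (deriv_sinhRatio_pos hc b).le (deriv_sinhRatio_pos hc a).le
    two_ne_zero, deriv_sinhRatio_sq hc, deriv_sinhRatio_sq hc]
  have hsinh : sinh a ^ 2 ≤ sinh b ^ 2 :=
    pow_le_pow_left₀ (sinh_nonneg_iff.2 (le_of_lt ha)) (sinh_le_sinh.2 hab) 2
  gcongr c ^ 2 * ?_
  exact one_add_div_add_pow_three_le_of_le hc hc3 (sq_nonneg _) hsinh

theorem sinhRatio_abs (t : ℝ) : sinhRatio c |t| = |sinhRatio c t| := by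
  rw [sinhRatio, sinhRatio, ← abs_sinh, abs_div, sq_abs, abs_of_nonneg (sqrt_nonneg _)]

theorem sinh_log_sqrt_sub_log_sqrt {x y : ℝ} (hx : 0 < x) (hy : 0 < y) :
    sinh (log √x - log √y) = (x - y) / (2 * √x * √y) := by
  have hsx : 0 < √x := sqrt_pos.2 hx
  have hsy : 0 < √y := sqrt_pos.2 hy
  rw [sinh_eq, neg_sub, exp_sub, exp_sub, exp_log hsx, exp_log hsy]
  field_simp
  rw [sq_sqrt hx.le, sq_sqrt hy.le]

theorem abs_sub_div_sqrt_eq_sinhRatio (hc : 0 < c) {x y : ℝ} (hx : 0 < x) (hy : 0 < y) :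
    |x - y| / √((x - y) ^ 2 + 4 * c * x * y) = sinhRatio c |log √x - log √y| := by
  have hw : 0 < 2 * √x * √y := by positivity
  have hw2 : (2 * √x * √y) ^ 2 = 4 * x * y := by
    rw [mul_pow, mul_pow, sq_sqrt hx.le, sq_sqrt hy.le]
    ring
  rw [sinhRatio_abs, sinhRatio, sinh_log_sqrt_sub_log_sqrt hx hy, div_pow,
    div_add' _ _ _ (pow_pos hw 2).ne', sqrt_div' _ (by positivity), sqrt_sq hw.le,
    div_div_div_cancel_right₀ hw.ne', hw2, abs_div, abs_of_pos (sqrt_pos.2 (by positivity))]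
  ring_nf

theorem ppf_alpha_Rpos_metric (α : ℝ) (h0 : 0 < α) (h12 : α ≤ 12)
    (p : ℝ → ℝ → ℝ)
    (hp : ∀ x y, p x y = |x - y| / Real.sqrt ((x - y)^2 + α*x*y)) :
    (∀ x y z : ℝ, 0 < x → 0 < y → 0 < z → p x y ≤ p x z + p z y) ∧
    (∀ x y : ℝ, 0 < x → 0 < y → p x y = p y x) ∧
    (∀ x y : ℝ, 0 < x → 0 < y → (p x y = 0 ↔ x = y)) := by
  have hc : 0 < α / 4 := by positivity
  have hp' : ∀ x y, 0 < x → 0 < y → p x y = sinhRatio (α / 4) |log √x - log √y| := by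
    intro x y hx hy
    rw [hp, ← abs_sub_div_sqrt_eq_sinhRatio hc hx hy]
    ring_nf
  refine ⟨fun x y z hx hy hz => ?_, fun x y _ _ => ?_, fun x y hx hy => ?_⟩
  · rw [hp' x y hx hy, hp' x z hx hz, hp' z y hz hy]
    calc _ ≤ sinhRatio (α / 4) (|log √x - log √z| + |log √z - log √y|) :=
          (sinhRatio_strictMono hc).monotone (abs_sub_le _ _ _)
      _ ≤ _ := (sinhRatio_concaveOn hc (by linarith)).map_add_le (by simp [sinhRatio])
          (abs_nonneg _) (abs_nonneg _)
  · rw [hp, hp, abs_sub_comm]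
    ring_nf
  · rw [hp, div_eq_zero_iff, abs_eq_zero, sub_eq_zero,
      or_iff_left (sqrt_pos.2 (by positivity)).ne']
end

section
/- For every constant α > 12, the function p(x,y) = |x − y|/√((x − y)² + αxy) on ℝ⁺ fails the triangle inequality: there exist x, y, z > 0 with p(x,y) > p(x,z) + p(z,y). -/
/-!
`p` is invariant under scaling both arguments, so for `x = 1`, `z = r`, `y = r²` the triangle
inequality reads `p(1, r²) ≤ 2 p(1, r)`. Squaring, this is equivalent to
`(r - 1)⁴ (α r - 3 (r + 1)²) ≤ 0`. The function `3 (r + 1)² / r` takes its minimum `12` at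
`r = 1`, so for `α > 12` some `r > 1` violates it.
-/

open Filter Topology

noncomputable def ppf (α x y : ℝ) : ℝ :=
  |x - y| / Real.sqrt ((x - y) ^ 2 + α * x * y)

theorem ppf_mul_mul (α : ℝ) {c : ℝ} (hc : c ≠ 0) (x y : ℝ) :
    ppf α (c * x) (c * y) = ppf α x y := by
  have hsq : (c * x - c * y) ^ 2 + α * (c * x) * (c * y) = c ^ 2 * ((x - y) ^ 2 + α * x * y) := by
    ring
  rw [ppf, ppf, hsq, Real.sqrt_mul (sq_nonneg c), Real.sqrt_sq_eq_abs, ← mul_sub, abs_mul,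
    mul_div_mul_left _ _ (abs_ne_zero.2 hc)]

theorem ppf_one_left {α t : ℝ} (ht : 1 ≤ t) :
    ppf α 1 t = (t - 1) / Real.sqrt ((t - 1) ^ 2 + α * t) := by
  rw [ppf, abs_sub_comm, abs_of_nonneg (sub_nonneg.2 ht), sub_sq_comm, mul_one]

theorem two_mul_ppf_one_lt_ppf_one_sq {α r : ℝ} (hr : 1 < r) (hα : 3 * (r + 1) ^ 2 < α * r) :
    2 * ppf α 1 r < ppf α 1 (r ^ 2) := by
  have hr0 : 0 < r := by linarith
  have hαr : 0 < α * r := lt_of_le_of_lt (by positivity) hα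
  set D := (r - 1) ^ 2 + α * r
  set B := (r ^ 2 - 1) ^ 2 + α * r ^ 2
  have hD : 0 < D := by positivity
  have hB : 0 < B := by
    have : α * r ^ 2 = r * (α * r) := by ring
    simp only [B, this]
    positivity
  have hdiff : (r ^ 2 - 1) ^ 2 * D - (2 * (r - 1)) ^ 2 * B =
      (r - 1) ^ 4 * (α * r - 3 * (r + 1) ^ 2) := by
    ring
  have hsq : (2 * (r - 1) * Real.sqrt B) ^ 2 < ((r ^ 2 - 1) * Real.sqrt D) ^ 2 := by
    rw [mul_pow (2 * (r - 1)), mul_pow (r ^ 2 - 1), Real.sq_sqrt hB.le, Real.sq_sqrt hD.le,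
      ← sub_pos, hdiff]
    exact mul_pos (pow_pos (by linarith) 4) (by linarith)
  have hcross : 2 * (r - 1) * Real.sqrt B < (r ^ 2 - 1) * Real.sqrt D :=
    lt_of_pow_lt_pow_left₀ 2 (mul_nonneg (by nlinarith) (Real.sqrt_nonneg D)) hsq
  rw [ppf_one_left hr.le, ppf_one_left (by nlinarith), ← mul_div_assoc,
    div_lt_div_iff₀ (Real.sqrt_pos.2 hD) (Real.sqrt_pos.2 hB)]
  exact hcross

theorem exists_one_lt_three_mul_add_one_sq_lt {α : ℝ} (hα : 12 < α) :
    ∃ r, 1 < r ∧ 3 * (r + 1) ^ 2 < α * r := by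
  have hnear : ∀ᶠ r in 𝓝 (1 : ℝ), 3 * (r + 1) ^ 2 < α * r :=
    (continuous_const.mul ((continuous_id.add continuous_const).pow 2)).continuousAt.eventually_lt
      (continuous_const.mul continuous_id).continuousAt (by norm_num; linarith)
  exact ((hnear.filter_mono (nhdsWithin_le_nhds (s := Set.Ioi 1))).and
    self_mem_nhdsWithin).exists.imp fun _ h => ⟨h.2, h.1⟩

theorem ppf_alpha_Rpos_not_metric (α : ℝ) (h12 : 12 < α)
    (p : ℝ → ℝ → ℝ)
    (hp : ∀ x y, p x y = |x - y| / Real.sqrt ((x - y)^2 + α*x*y)) :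
    ∃ x y z : ℝ, 0 < x ∧ 0 < y ∧ 0 < z ∧ p x y > p x z + p z y := by
  obtain rfl : p = ppf α := funext fun x => funext (hp x)
  obtain ⟨r, hr, hαr⟩ := exists_one_lt_three_mul_add_one_sq_lt h12
  have hscale : ppf α r (r ^ 2) = ppf α 1 r := by
    simpa [sq] using ppf_mul_mul α (c := r) (by positivity) 1 r
  refine ⟨1, r ^ 2, r, one_pos, by positivity, by linarith, ?_⟩
  linarith [two_mul_ppf_one_lt_ppf_one_sq hr hαr]
end

section
/- For every α > 0 and n ≥ 1, the function p(x,y) = |x − y|/√(|x − y|² + α(1 − |x|)(1 − |y|)) on the open unit ball 𝔹ⁿ is not a metric: with k = α/(4 + α), the points x = k·e₁, y = −k·e₁, z = 0 satisfy p(x,y) > p(x,z) + p(z,y). -/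
/-!
On the segment through the origin in a unit direction `e`, the points `x = k • e`, `z = 0`,
`y = -k • e` give `p(x, y) = 2k / √(4k² + α(1-k)²)` and `p(x, z) = p(z, y) = k / √(k² + α(1-k))`.
The triangle inequality through `z` fails exactly when `4k² + α(1-k)² < k² + α(1-k)`, i.e. when
`k (3 + α) < α`, which holds for `k = α / (4 + α)`.
-/

section

variable {E : Type*} [NormedAddCommGroup E] [NormedSpace ℝ E]

noncomputable def ppfDist (α : ℝ) (x y : E) : ℝ :=
  ‖x - y‖ / √(‖x - y‖ ^ 2 + α * (1 - ‖x‖) * (1 - ‖y‖))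

lemma norm_smul_of_norm_eq_one {e : E} (he : ‖e‖ = 1) {k : ℝ} (hk : 0 ≤ k) : ‖k • e‖ = k := by
  rw [norm_smul, he, mul_one, Real.norm_of_nonneg hk]

lemma ppfDist_smul_neg_smul {e : E} (he : ‖e‖ = 1) (α : ℝ) {k : ℝ} (hk : 0 ≤ k) :
    ppfDist α (k • e) (-k • e) = 2 * k / √((2 * k) ^ 2 + α * (1 - k) ^ 2) := by
  have hdiff : k • e - -k • e = (2 * k) • e := by
    rw [neg_smul, sub_neg_eq_add, ← two_smul ℝ, smul_smul]
  have hneg : ‖-k • e‖ = k := by rw [neg_smul, norm_neg, norm_smul_of_norm_eq_one he hk]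
  rw [ppfDist, hdiff, norm_smul_of_norm_eq_one he (by positivity),
    norm_smul_of_norm_eq_one he hk, hneg, mul_assoc, ← sq]

lemma ppfDist_smul_zero {e : E} (he : ‖e‖ = 1) (α : ℝ) {k : ℝ} (hk : 0 ≤ k) :
    ppfDist α (k • e) 0 = k / √(k ^ 2 + α * (1 - k)) := by
  rw [ppfDist, sub_zero, norm_zero, norm_smul_of_norm_eq_one he hk, sub_zero, mul_one]

lemma ppfDist_zero_neg_smul {e : E} (he : ‖e‖ = 1) (α : ℝ) {k : ℝ} (hk : 0 ≤ k) :
    ppfDist α 0 (-k • e) = k / √(k ^ 2 + α * (1 - k)) := by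
  rw [ppfDist, zero_sub, norm_neg, norm_zero, neg_smul, norm_neg,
    norm_smul_of_norm_eq_one he hk, sub_zero, mul_one]

lemma sq_add_lt_of_mul_three_add_lt {α k : ℝ} (hk : 0 < k) (hkα : k * (3 + α) < α) :
    (2 * k) ^ 2 + α * (1 - k) ^ 2 < k ^ 2 + α * (1 - k) := by
  nlinarith

lemma ppfDist_triangle_fails {e : E} (he : ‖e‖ = 1) {α k : ℝ} (hα : 0 < α) (hk : 0 < k)
    (hkα : k * (3 + α) < α) :
    ppfDist α (k • e) 0 + ppfDist α 0 (-k • e) < ppfDist α (k • e) (-k • e) := by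
  rw [ppfDist_smul_zero he α hk.le, ppfDist_zero_neg_smul he α hk.le,
    ppfDist_smul_neg_smul he α hk.le, ← add_div, ← two_mul]
  have hpos : 0 < (2 * k) ^ 2 + α * (1 - k) ^ 2 := by positivity
  exact div_lt_div_of_pos_left (by positivity) (Real.sqrt_pos.mpr hpos)
    (Real.sqrt_lt_sqrt hpos.le (sq_add_lt_of_mul_three_add_lt hk hkα))

end

theorem ppf_alpha_ball_not_metric (n : ℕ) (hn : 1 ≤ n) (α : ℝ) (hα : 0 < α)
    (p : EuclideanSpace ℝ (Fin n) → EuclideanSpace ℝ (Fin n) → ℝ)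
    (hp : ∀ x y, p x y = ‖x - y‖ /
      Real.sqrt (‖x - y‖^2 + α * (1 - ‖x‖) * (1 - ‖y‖))) :
    ∀ e₁ : EuclideanSpace ℝ (Fin n), e₁ = EuclideanSpace.single ⟨0, by omega⟩ (1 : ℝ) →
      p ((α/(4+α)) • e₁) (-(α/(4+α)) • e₁) >
        p ((α/(4+α)) • e₁) 0 + p 0 (-(α/(4+α)) • e₁) := by
  rintro e₁ rfl
  obtain rfl : p = ppfDist α := funext₂ hp
  have h4α : 0 < 4 + α := by linarith
  have hk : 0 < α / (4 + α) := div_pos hα h4α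
  have hkα : α / (4 + α) * (3 + α) < α := by
    rw [div_mul_eq_mul_div, div_lt_iff₀ h4α]
    nlinarith
  exact ppfDist_triangle_fails (by simp) hα hk hkα
end
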